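/- arXiv:1302.1367 — 8 statements merged into one kernel-verified Lean document; each statement's English description precedes it below -/
import Mathlib

section
/- Let ψ ∈ Ω be continuously differentiable on (0,∞) with ψ(t) = ∫₀^t ψ'(s) ds for all t ≥ 0. Then the following three conditions are equivalent: (i) for every a > 1, lim_{t→∞} ψ(at)/ψ(t) = 1; (ii) there exists a > 1 such that lim_{t→∞} ψ(at)/ψ(t) = 1; (iii) lim_{t→∞} t·ψ'(t)/ψ(t) = 0. -/
open Filter Set Topology

/-!
Concavity squeezes both quantities between secant slopes. The tangent line at `t` lies above the
graph, so `1 ≤ ψ(at)/ψ(t) ≤ 1 + (a - 1) · tψ'(t)/ψ(t)`, which gives (iii) ⇒ (i). The derivative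
at the right end of the secant over `[t, at]` is at most its slope, so
`0 ≤ at·ψ'(at)/ψ(at) ≤ a/(a - 1) · (1 - ψ(t)/ψ(at))`, which gives (ii) ⇒ (iii).
-/

namespace ConcaveOn

variable {S : Set ℝ} {f : ℝ → ℝ} {f' x y : ℝ}

lemma le_add_mul_sub_of_hasDerivAt (hf : ConcaveOn ℝ S f) (hx : x ∈ S) (hy : y ∈ S)
    (hxy : x < y) (hf' : HasDerivAt f f' x) : f y ≤ f x + f' * (y - x) := by
  have h := hf.slope_le_of_hasDerivAt hx hy hxy hf'
  rw [slope_def_field, div_le_iff₀ (sub_pos.2 hxy)] at h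
  linarith

lemma mul_sub_le_sub_of_hasDerivAt (hf : ConcaveOn ℝ S f) (hx : x ∈ S) (hy : y ∈ S)
    (hxy : x < y) (hf' : HasDerivAt f f' y) : f' * (y - x) ≤ f y - f x := by
  have h := hf.le_slope_of_hasDerivAt hx hy hxy hf'
  rwa [slope_def_field, le_div_iff₀ (sub_pos.2 hxy)] at h

lemma pos_of_tendsto_atTop (hf : ConcaveOn ℝ (Ici 0) f) (h0 : 0 ≤ f 0)
    (htop : Tendsto f atTop atTop) {t : ℝ} (ht : 0 < t) : 0 < f t := by
  obtain ⟨u, hfu, htu⟩ := ((htop.eventually_gt_atTop 0).and (eventually_gt_atTop t)).exists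
  have hu : 0 < u := ht.trans htu
  have hw : 0 ≤ 1 - t / u := sub_nonneg.2 ((div_le_one hu).2 htu.le)
  have hcomb := hf.2 (mem_Ici.2 le_rfl) (mem_Ici.2 hu.le) hw (div_nonneg ht.le hu.le)
    (sub_add_cancel 1 (t / u))
  have ht_eq : (1 - t / u) • (0 : ℝ) + (t / u) • u = t := by
    simp only [smul_eq_mul, mul_zero, zero_add, div_mul_cancel₀ t hu.ne']
  rw [ht_eq, smul_eq_mul, smul_eq_mul] at hcomb
  have : 0 < t / u * f u := by positivity
  linarith [mul_nonneg hw h0]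

end ConcaveOn

section Elasticity

variable {ψ ψ' : ℝ → ℝ} {a : ℝ}

lemma div_le_one_add_mul_elasticity (hconc : ConcaveOn ℝ (Ici 0) ψ)
    (hderiv : ∀ t ∈ Ioi (0 : ℝ), HasDerivAt ψ (ψ' t) t) (ha : 1 < a) {t : ℝ} (ht : 0 < t)
    (hψt : 0 < ψ t) : ψ (a * t) / ψ t ≤ 1 + (a - 1) * (t * ψ' t / ψ t) := by
  have htu : t < a * t := (lt_mul_iff_one_lt_left ht).2 ha
  have h := hconc.le_add_mul_sub_of_hasDerivAt (mem_Ici.2 ht.le)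
    (mem_Ici.2 (ht.trans htu).le) htu (hderiv t ht)
  rw [div_le_iff₀ hψt]
  calc ψ (a * t) ≤ ψ t + ψ' t * (a * t - t) := h
    _ = (1 + (a - 1) * (t * ψ' t / ψ t)) * ψ t := by field_simp

lemma elasticity_le_mul_one_sub_div (hconc : ConcaveOn ℝ (Ici 0) ψ)
    (hderiv : ∀ t ∈ Ioi (0 : ℝ), HasDerivAt ψ (ψ' t) t) (ha : 1 < a) {t : ℝ} (ht : 0 < t)
    (hψat : 0 < ψ (a * t)) :
    a * t * ψ' (a * t) / ψ (a * t) ≤ a / (a - 1) * (1 - ψ t / ψ (a * t)) := by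
  have htu : t < a * t := (lt_mul_iff_one_lt_left ht).2 ha
  have hat : 0 < a * t := ht.trans htu
  have h := hconc.mul_sub_le_sub_of_hasDerivAt (mem_Ici.2 ht.le) (mem_Ici.2 hat.le) htu
    (hderiv _ hat)
  have ha1 : 0 < a - 1 := sub_pos.2 ha
  rw [div_le_iff₀ hψat]
  calc a * t * ψ' (a * t) = a / (a - 1) * (ψ' (a * t) * (a * t - t)) := by field_simp
    _ ≤ a / (a - 1) * (ψ (a * t) - ψ t) := by gcongr
    _ = a / (a - 1) * (1 - ψ t / ψ (a * t)) * ψ (a * t) := by field_simp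

lemma tendsto_ratio_of_tendsto_elasticity (hmono : MonotoneOn ψ (Ici 0))
    (hconc : ConcaveOn ℝ (Ici 0) ψ) (hpos : ∀ t > 0, 0 < ψ t)
    (hderiv : ∀ t ∈ Ioi (0 : ℝ), HasDerivAt ψ (ψ' t) t)
    (helast : Tendsto (fun t => t * ψ' t / ψ t) atTop (𝓝 0)) (ha : 1 < a) :
    Tendsto (fun t => ψ (a * t) / ψ t) atTop (𝓝 1) := by
  have hupper : Tendsto (fun t => 1 + (a - 1) * (t * ψ' t / ψ t)) atTop (𝓝 1) := by
    simpa using (helast.const_mul (a - 1)).const_add 1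
  refine tendsto_of_tendsto_of_tendsto_of_le_of_le' tendsto_const_nhds hupper ?_ ?_
  · filter_upwards [eventually_gt_atTop 0] with t ht
    have htu : t < a * t := (lt_mul_iff_one_lt_left ht).2 ha
    exact (one_le_div (hpos t ht)).2 (hmono (mem_Ici.2 ht.le) (mem_Ici.2 (ht.trans htu).le) htu.le)
  · filter_upwards [eventually_gt_atTop 0] with t ht
    exact div_le_one_add_mul_elasticity hconc hderiv ha ht (hpos t ht)

lemma tendsto_elasticity_of_tendsto_ratio (hmono : MonotoneOn ψ (Ici 0))
    (hconc : ConcaveOn ℝ (Ici 0) ψ) (hpos : ∀ t > 0, 0 < ψ t)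
    (hderiv : ∀ t ∈ Ioi (0 : ℝ), HasDerivAt ψ (ψ' t) t) (ha : 1 < a)
    (hratio : Tendsto (fun t => ψ (a * t) / ψ t) atTop (𝓝 1)) :
    Tendsto (fun t => t * ψ' t / ψ t) atTop (𝓝 0) := by
  have ha0 : 0 < a := one_pos.trans ha
  have hupper : Tendsto (fun t => a / (a - 1) * (1 - ψ t / ψ (a * t))) atTop (𝓝 0) := by
    have hinv : Tendsto (fun t => ψ t / ψ (a * t)) atTop (𝓝 1) := by
      simpa using hratio.inv₀ one_ne_zero
    simpa using (hinv.const_sub 1).const_mul (a / (a - 1))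
  have hscaled : Tendsto (fun t => a * t * ψ' (a * t) / ψ (a * t)) atTop (𝓝 0) := by
    refine tendsto_of_tendsto_of_tendsto_of_le_of_le' tendsto_const_nhds hupper ?_ ?_
    · filter_upwards [eventually_gt_atTop 0] with t ht
      have hat : 0 < a * t := mul_pos ha0 ht
      have hψ' : 0 ≤ ψ' (a * t) := (hderiv _ hat).hasDerivWithinAt.nonneg_of_monotoneOn
        (isOpen_Ioi.preperfect _ hat) (hmono.mono Ioi_subset_Ici_self)
      exact div_nonneg (mul_nonneg hat.le hψ') (hpos _ hat).le
    · filter_upwards [eventually_gt_atTop 0] with t ht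
      exact elasticity_le_mul_one_sub_div hconc hderiv ha ht (hpos _ (mul_pos ha0 ht))
  refine (hscaled.comp (tendsto_id.atTop_div_const ha0)).congr fun t => ?_
  simp only [Function.comp_apply, id, mul_div_cancel₀ t ha0.ne']

end Elasticity

theorem stmt0_general
    (ψ ψ' : ℝ → ℝ)
    (hmono : MonotoneOn ψ (Set.Ici 0))
    (hconc : ConcaveOn ℝ (Set.Ici 0) ψ)
    (hzero : ψ 0 = 0)
    (htop : Tendsto ψ atTop atTop)
    (hderiv : ∀ t ∈ Set.Ioi (0:ℝ), HasDerivAt ψ (ψ' t) t) :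
    ((∀ a > (1:ℝ), Tendsto (fun t => ψ (a * t) / ψ t) atTop (𝓝 1)) ↔
      (∃ a > (1:ℝ), Tendsto (fun t => ψ (a * t) / ψ t) atTop (𝓝 1)))
    ∧
    ((∀ a > (1:ℝ), Tendsto (fun t => ψ (a * t) / ψ t) atTop (𝓝 1)) ↔
      Tendsto (fun t => t * ψ' t / ψ t) atTop (𝓝 0)) := by
  have hpos : ∀ t > 0, 0 < ψ t := fun t ht => hconc.pos_of_tendsto_atTop hzero.ge htop ht
  have hiii_i := fun helast a (ha : a > 1) =>
    tendsto_ratio_of_tendsto_elasticity hmono hconc hpos hderiv helast ha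
  have hii_iii := fun a (ha : a > 1) hratio =>
    tendsto_elasticity_of_tendsto_ratio hmono hconc hpos hderiv ha hratio
  refine ⟨⟨fun hi => ⟨2, one_lt_two, hi 2 one_lt_two⟩, ?_⟩, ⟨?_, hiii_i⟩⟩
  · rintro ⟨a, ha, hratio⟩
    exact hiii_i (hii_iii a ha hratio)
  · exact fun hi => hii_iii 2 one_lt_two (hi 2 one_lt_two)

/-- For `ψ ∈ Ω` (increasing concave on `[0,∞)`, `ψ 0 = 0`, `ψ → ∞`),
continuously differentiable on `(0,∞)` with `ψ t = ∫₀^t ψ'`, the conditions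
(i) `ψ(at)/ψ(t) → 1` for all `a > 1`, (ii) for some `a > 1`, and
(iii) `t ψ'(t)/ψ(t) → 0` are equivalent. -/
theorem stmt0
    (ψ ψ' : ℝ → ℝ)
    (hmono : MonotoneOn ψ (Set.Ici 0))
    (hconc : ConcaveOn ℝ (Set.Ici 0) ψ)
    (hzero : ψ 0 = 0)
    (hnonneg : ∀ t ≥ (0:ℝ), 0 ≤ ψ t)
    (htop : Tendsto ψ atTop atTop)
    (hderiv : ∀ t ∈ Set.Ioi (0:ℝ), HasDerivAt ψ (ψ' t) t)
    (hcont : ContinuousOn ψ' (Set.Ioi 0))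
    (hfund : ∀ t ≥ (0:ℝ), ψ t = ∫ s in (0:ℝ)..t, ψ' s) :
    ((∀ a > (1:ℝ), Tendsto (fun t => ψ (a * t) / ψ t) atTop (𝓝 1)) ↔
      (∃ a > (1:ℝ), Tendsto (fun t => ψ (a * t) / ψ t) atTop (𝓝 1)))
    ∧
    ((∀ a > (1:ℝ), Tendsto (fun t => ψ (a * t) / ψ t) atTop (𝓝 1)) ↔
      Tendsto (fun t => t * ψ' t / ψ t) atTop (𝓝 0)) :=
  stmt0_general ψ ψ' hmono hconc hzero htop hderiv
end

section
/- Let ψ ∈ Ω be such that for every α > 1 the limit A_ψ(α) := lim_{t→∞} ψ(t^α)/ψ(t) exists and is finite. Then for every α > 0 the limit A_ψ(α) := lim_{t→∞} ψ(t^α)/ψ(t) exists and equals α^{log A_ψ(e)}; in particular, A_ψ(αβ) = A_ψ(α)·A_ψ(β) for all α, β > 0 and lim_{α→1⁺} A_ψ(α) = 1. -/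
/-!
Write `A(α)` for the limit of `ψ (t ^ α) / ψ t`. For `α, β > 1`, substituting `t ↦ t ^ β`
gives `A(αβ) = A(α) A(β)`, and monotonicity of `ψ` makes `A` monotone. Hence `x ↦ log A(eˣ)`
is a monotone additive function on `(0, ∞)`, so it is linear, i.e. `A(α) = α ^ log A(e)` for
`α > 1`. For `α < 1` substitute `t ↦ t ^ α` in the ratio for `1 / α` and invert.
-/

open Filter Set Topology

section Cauchy

variable {g : ℝ → ℝ}

lemma map_natSucc_mul_of_map_add (hadd : ∀ x > 0, ∀ y > 0, g (x + y) = g x + g y)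
    {y : ℝ} (hy : 0 < y) : ∀ n : ℕ, g ((n + 1) * y) = (n + 1) * g y
  | 0 => by simp
  | n + 1 => by
    have hrec := map_natSucc_mul_of_map_add hadd hy n
    push_cast
    rw [show ((n : ℝ) + 1 + 1) * y = (n + 1) * y + y by ring, hadd _ (by positivity) _ hy, hrec]
    ring

theorem eq_mul_of_monotoneOn_of_map_add (hmono : MonotoneOn g (Ioi 0))
    (hadd : ∀ x > 0, ∀ y > 0, g (x + y) = g x + g y) {x : ℝ} (hx : 0 < x) :
    g x = g 1 * x := by
  have hmul {y : ℝ} (hy : 0 < y) := map_natSucc_mul_of_map_add hadd hy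
  have hmul_one (m : ℕ) : g (m + 1) = (m + 1) * g 1 := by simpa using hmul one_pos m
  have hg1 : 0 ≤ g 1 := by
    have h := hmono (mem_Ioi.2 one_pos) (mem_Ioi.2 two_pos) one_le_two
    rw [show (2 : ℝ) = 1 + 1 by norm_num, hadd 1 one_pos 1 one_pos] at h
    linarith
  -- Squeeze `(n + 1) x` between consecutive integers `m ≤ (n + 1) x < m + 1`.
  have hsqueeze : ∀ n : ℕ, ((n : ℝ) + 1) * |g x - g 1 * x| ≤ g 1 := by
    intro n
    set m := ⌊((n : ℝ) + 1) * x⌋₊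
    have hm_le : (m : ℝ) ≤ (n + 1) * x := Nat.floor_le (by positivity)
    have hm_gt : (n + 1) * x < m + 1 := Nat.lt_floor_add_one _
    have hupper : (n + 1) * g x ≤ (m + 1) * g 1 := by
      rw [← hmul hx n, ← hmul_one m]
      exact hmono (mem_Ioi.2 (by positivity)) (mem_Ioi.2 (by positivity)) (by linarith)
    have hlower : (m + 1) * g 1 ≤ (n + 1) * g x + g 1 := by
      rw [← hmul hx n, ← hadd _ (by positivity) 1 one_pos, ← hmul_one m]
      exact hmono (mem_Ioi.2 (by positivity)) (mem_Ioi.2 (by positivity)) (by linarith)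
    rw [← abs_of_pos (by positivity : (0 : ℝ) < n + 1), ← abs_mul, abs_le]
    constructor <;> nlinarith [mul_le_mul_of_nonneg_right hm_le hg1,
      mul_le_mul_of_nonneg_right hm_gt.le hg1]
  by_contra hne
  have hpos : 0 < |g x - g 1 * x| := abs_pos.2 (sub_ne_zero.2 hne)
  obtain ⟨n, hn⟩ := exists_nat_gt (g 1 / |g x - g 1 * x|)
  rw [div_lt_iff₀ hpos] at hn
  nlinarith [hsqueeze n]

end Cauchy

section PowRatio

variable {ψ : ℝ → ℝ} {α β : ℝ}

noncomputable def powRatioLimit (ψ : ℝ → ℝ) (α : ℝ) : ℝ :=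
  limUnder atTop fun t => ψ (t ^ α) / ψ t

lemma tendsto_powRatioLimit
    (hlim : ∀ α > (1 : ℝ), ∃ L : ℝ, Tendsto (fun t => ψ (t ^ α) / ψ t) atTop (𝓝 L))
    (hα : 1 < α) :
    Tendsto (fun t => ψ (t ^ α) / ψ t) atTop (𝓝 (powRatioLimit ψ α)) :=
  tendsto_nhds_limUnder (hlim α hα)

lemma eventually_powRatio_le (hmono : MonotoneOn ψ (Ici 0)) (htop : Tendsto ψ atTop atTop)
    (hαβ : α ≤ β) : ∀ᶠ t in atTop, ψ (t ^ α) / ψ t ≤ ψ (t ^ β) / ψ t := by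
  filter_upwards [htop.eventually_gt_atTop 0, eventually_ge_atTop 1] with t hψt ht
  have ht0 : (0 : ℝ) ≤ t := by linarith
  gcongr
  exact hmono (Real.rpow_nonneg ht0 α) (Real.rpow_nonneg ht0 β)
    (Real.rpow_le_rpow_of_exponent_le ht hαβ)

lemma eventually_powRatio_one (htop : Tendsto ψ atTop atTop) :
    ∀ᶠ t in atTop, ψ (t ^ (1 : ℝ)) / ψ t = 1 := by
  filter_upwards [htop.eventually_gt_atTop 0] with t hψt
  rw [Real.rpow_one, div_self hψt.ne']

lemma one_le_powRatioLimit (hmono : MonotoneOn ψ (Ici 0)) (htop : Tendsto ψ atTop atTop)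
    (hlim : ∀ α > (1 : ℝ), ∃ L : ℝ, Tendsto (fun t => ψ (t ^ α) / ψ t) atTop (𝓝 L))
    (hα : 1 < α) : 1 ≤ powRatioLimit ψ α :=
  ge_of_tendsto (tendsto_powRatioLimit hlim hα) <| by
    filter_upwards [eventually_powRatio_one htop, eventually_powRatio_le hmono htop hα.le]
      with t hone hle
    rwa [← hone]

lemma powRatioLimit_mono (hmono : MonotoneOn ψ (Ici 0)) (htop : Tendsto ψ atTop atTop)
    (hlim : ∀ α > (1 : ℝ), ∃ L : ℝ, Tendsto (fun t => ψ (t ^ α) / ψ t) atTop (𝓝 L))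
    (hα : 1 < α) (hαβ : α ≤ β) :
    powRatioLimit ψ α ≤ powRatioLimit ψ β :=
  le_of_tendsto_of_tendsto (tendsto_powRatioLimit hlim hα)
    (tendsto_powRatioLimit hlim (hα.trans_le hαβ)) (eventually_powRatio_le hmono htop hαβ)

lemma powRatioLimit_mul (htop : Tendsto ψ atTop atTop)
    (hlim : ∀ α > (1 : ℝ), ∃ L : ℝ, Tendsto (fun t => ψ (t ^ α) / ψ t) atTop (𝓝 L))
    (hα : 1 < α) (hβ : 1 < β) :
    powRatioLimit ψ (α * β) = powRatioLimit ψ α * powRatioLimit ψ β := by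
  have hβ0 : 0 < β := by linarith
  refine tendsto_nhds_unique (tendsto_powRatioLimit hlim (one_lt_mul_of_lt_of_le hα hβ.le)) ?_
  have hsub := (tendsto_powRatioLimit hlim hα).comp (tendsto_rpow_atTop hβ0)
  refine (hsub.mul (tendsto_powRatioLimit hlim hβ)).congr' ?_
  filter_upwards [(tendsto_rpow_atTop hβ0).eventually (htop.eventually_gt_atTop 0),
    eventually_ge_atTop 0] with t hψ ht
  simp only [Function.comp_apply]
  rw [← Real.rpow_mul ht, mul_comm β α, div_mul_div_cancel₀ hψ.ne']

lemma powRatioLimit_eq_rpow (hmono : MonotoneOn ψ (Ici 0)) (htop : Tendsto ψ atTop atTop)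
    (hlim : ∀ α > (1 : ℝ), ∃ L : ℝ, Tendsto (fun t => ψ (t ^ α) / ψ t) atTop (𝓝 L))
    (hα : 1 < α) :
    powRatioLimit ψ α = α ^ Real.log (powRatioLimit ψ (Real.exp 1)) := by
  have hpos : ∀ x > (0 : ℝ), 0 < powRatioLimit ψ (Real.exp x) := fun x hx =>
    zero_lt_one.trans_le (one_le_powRatioLimit hmono htop hlim (Real.one_lt_exp_iff.2 hx))
  have hα0 : 0 < α := by linarith
  have hlinear :
      Real.log (powRatioLimit ψ α) = Real.log (powRatioLimit ψ (Real.exp 1)) * Real.log α := by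
    simpa only [Real.exp_log hα0] using
      eq_mul_of_monotoneOn_of_map_add (g := fun x => Real.log (powRatioLimit ψ (Real.exp x)))
        (fun x hx y _ hxy => Real.log_le_log (hpos x hx) <| powRatioLimit_mono hmono htop hlim
          (Real.one_lt_exp_iff.2 hx) (Real.exp_le_exp.2 hxy))
        (fun x hx y hy => by
          simp only [Real.exp_add]
          rw [powRatioLimit_mul htop hlim (Real.one_lt_exp_iff.2 hx) (Real.one_lt_exp_iff.2 hy),
            Real.log_mul (hpos x hx).ne' (hpos y hy).ne'])
        (Real.log_pos hα)
  rw [Real.rpow_def_of_pos hα0, mul_comm, ← hlinear,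
    Real.exp_log (zero_lt_one.trans_le (one_le_powRatioLimit hmono htop hlim hα))]

theorem tendsto_powRatio_rpow (hmono : MonotoneOn ψ (Ici 0)) (htop : Tendsto ψ atTop atTop)
    (hlim : ∀ α > (1 : ℝ), ∃ L : ℝ, Tendsto (fun t => ψ (t ^ α) / ψ t) atTop (𝓝 L))
    (hα : 0 < α) :
    Tendsto (fun t => ψ (t ^ α) / ψ t) atTop
      (𝓝 (α ^ Real.log (powRatioLimit ψ (Real.exp 1)))) := by
  rcases lt_trichotomy α 1 with hlt | rfl | hgt
  · have hinv : 1 < α⁻¹ := one_lt_inv₀ hα |>.2 hlt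
    have hsub := ((tendsto_powRatioLimit hlim hinv).comp (tendsto_rpow_atTop hα)).inv₀
      (zero_lt_one.trans_le (one_le_powRatioLimit hmono htop hlim hinv)).ne'
    rw [powRatioLimit_eq_rpow hmono htop hlim hinv, Real.inv_rpow hα.le, inv_inv] at hsub
    refine hsub.congr' ?_
    filter_upwards [eventually_ge_atTop 0] with t ht
    simp only [Function.comp_apply]
    rw [inv_div, ← Real.rpow_mul ht, mul_inv_cancel₀ hα.ne', Real.rpow_one]
  · rw [Real.one_rpow]
    exact tendsto_const_nhds.congr' <| (eventually_powRatio_one htop).mono fun _ h => h.symm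
  · rw [← powRatioLimit_eq_rpow hmono htop hlim hgt]
    exact tendsto_powRatioLimit hlim hgt

end PowRatio

theorem stmt1_general
    (ψ : ℝ → ℝ)
    (hmono : MonotoneOn ψ (Set.Ici 0))
    (htop : Tendsto ψ atTop atTop)
    (hlim : ∀ α > (1:ℝ), ∃ L : ℝ, Tendsto (fun t => ψ (t ^ α) / ψ t) atTop (𝓝 L)) :
    ∃ A : ℝ → ℝ,
      (∀ α > (0:ℝ), Tendsto (fun t => ψ (t ^ α) / ψ t) atTop (𝓝 (A α))) ∧
      (∀ α > (0:ℝ), A α = α ^ Real.log (A (Real.exp 1))) ∧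
      (∀ α > (0:ℝ), ∀ β > (0:ℝ), A (α * β) = A α * A β) ∧
      Tendsto A (𝓝[>] 1) (𝓝 1) := by
  set k := Real.log (powRatioLimit ψ (Real.exp 1))
  refine ⟨fun α => α ^ k, fun α hα => tendsto_powRatio_rpow hmono htop hlim hα, ?_, ?_, ?_⟩
  · intro α _
    simp only [Real.exp_one_rpow, Real.log_exp]
  · intro α hα β hβ
    exact Real.mul_rpow hα.le hβ.le
  · have hcont : ContinuousAt (fun α : ℝ => α ^ k) 1 :=
      Real.continuousAt_rpow_const 1 k (Or.inl one_ne_zero)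
    simpa only [Real.one_rpow] using hcont.tendsto.mono_left nhdsWithin_le_nhds

/-- If `ψ ∈ Ω` and for every `α > 1` the limit
`A_ψ(α) = lim_{t→∞} ψ(t^α)/ψ(t)` exists (finite), then the limit exists for all `α > 0`,
equals `α ^ log (A_ψ e)`, is multiplicative, and `A_ψ(α) → 1` as `α → 1⁺`. -/
theorem stmt1
    (ψ : ℝ → ℝ)
    (hmono : MonotoneOn ψ (Set.Ici 0))
    (hconc : ConcaveOn ℝ (Set.Ici 0) ψ)
    (hzero : ψ 0 = 0)
    (hnonneg : ∀ t ≥ (0:ℝ), 0 ≤ ψ t)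
    (htop : Tendsto ψ atTop atTop)
    (hlim : ∀ α > (1:ℝ), ∃ L : ℝ, Tendsto (fun t => ψ (t ^ α) / ψ t) atTop (𝓝 L)) :
    ∃ A : ℝ → ℝ,
      (∀ α > (0:ℝ), Tendsto (fun t => ψ (t ^ α) / ψ t) atTop (𝓝 (A α))) ∧
      (∀ α > (0:ℝ), A α = α ^ Real.log (A (Real.exp 1))) ∧
      (∀ α > (0:ℝ), ∀ β > (0:ℝ), A (α * β) = A α * A β) ∧
      Tendsto A (𝓝[>] 1) (𝓝 1) :=
  stmt1_general ψ hmono htop hlim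
end

section
/- Let ψ ∈ Ω. (1) If for every α > 1 the limit lim_{t→∞} ψ(t^α)/ψ(t) exists and is finite, then lim_{t→∞} ψ(t·ψ(t))/ψ(t) = 1. (2) If lim_{t→∞} ψ(t·ψ(t))/ψ(t) = 1, then for every a > 1 one has lim_{t→∞} ψ(at)/ψ(t) = 1. -/
/-!
A doubling bound `ψ (t ^ 2) ≤ C ψ t` forces `ψ t ≤ t ^ ε` eventually for every `ε > 0`. The limits
`L α = lim ψ (t ^ α) / ψ t` satisfy `L (β ^ m) = L β ^ m`, so `L (2 ^ (1 / m)) = L 2 ^ (1 / m)` is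
close to `1` for large `m`. With `β = 2 ^ (1 / m)` and `ψ t ≤ t ^ (β - 1)` we get
`ψ t ≤ ψ (t ψ t) ≤ ψ (t ^ β)`, which gives (1). For (2), `ψ t ≤ ψ (a t) ≤ ψ (t ψ t)` as soon as
`ψ t ≥ a`.
-/

open Filter Set Topology Asymptotics

section Growth

variable {ψ : ℝ → ℝ} {C : ℝ}

lemma apply_rpow_two_pow_le {T : ℝ} (hC : 0 ≤ C) (hT : 1 ≤ T)
    (hsq : ∀ t ≥ T, ψ (t ^ 2) ≤ C * ψ t) (n : ℕ) :
    ψ (T ^ (2 : ℝ) ^ n) ≤ C ^ n * ψ T := by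
  induction n with
  | zero => simp
  | succ n ih =>
    have hsplit : T ^ (2 : ℝ) ^ (n + 1) = (T ^ (2 : ℝ) ^ n) ^ 2 := by
      rw [← Real.rpow_mul_natCast (by linarith), pow_succ]
      norm_num
    calc ψ (T ^ (2 : ℝ) ^ (n + 1)) ≤ C * ψ (T ^ (2 : ℝ) ^ n) :=
          hsplit ▸ hsq _ (Real.self_le_rpow_of_one_le hT (one_le_pow₀ one_le_two))
      _ ≤ C * (C ^ n * ψ T) := mul_le_mul_of_nonneg_left ih hC
      _ = C ^ (n + 1) * ψ T := by ring

lemma eventually_pow_mul_le_rpow_two_pow {A r : ℝ} (hC : 0 < C) (hA : 0 < A) (hr : 1 < r) :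
    ∀ᶠ n : ℕ in atTop, C ^ n * A ≤ r ^ (2 : ℝ) ^ n := by
  have htwo : Tendsto (fun n : ℕ => ‖(2 : ℝ) ^ n‖) atTop atTop := by
    simpa using tendsto_pow_atTop_atTop_of_one_lt one_lt_two
  have hlog : (fun n : ℕ => Real.log C * n + Real.log A) =o[atTop] fun n => (2 : ℝ) ^ n :=
    ((isLittleO_coe_const_pow_of_one_lt one_lt_two).const_mul_left _).add
      (isLittleO_const_left.2 (Or.inr htwo))
  filter_upwards [hlog.bound (Real.log_pos hr)] with n hn
  rw [Real.norm_eq_abs, Real.norm_of_nonneg (by positivity)] at hn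
  rw [← Real.log_le_log_iff (by positivity) (by positivity), Real.log_mul (by positivity)
    hA.ne', Real.log_pow, Real.log_rpow (by linarith)]
  linarith [le_abs_self (Real.log C * n + Real.log A)]

lemma MonotoneOn.eventually_le_rpow_of_eventually_sq_le (hmono : MonotoneOn ψ (Ici 0))
    (htop : Tendsto ψ atTop atTop) (hsq : ∀ᶠ t in atTop, ψ (t ^ 2) ≤ C * ψ t)
    {ε : ℝ} (hε : 0 < ε) : ∀ᶠ t in atTop, ψ t ≤ t ^ ε := by
  obtain ⟨T, hT⟩ := eventually_atTop.1
    (hsq.and ((htop.eventually_gt_atTop 0).and (eventually_gt_atTop 1)))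
  obtain ⟨hsqT, hψT, hT1⟩ := hT T le_rfl
  have hC : 0 < C := by
    have : ψ T ≤ ψ (T ^ 2) :=
      hmono (by simp; linarith) (by simp [sq_nonneg])
        (le_self_pow₀ hT1.le two_ne_zero)
    by_contra! hC
    nlinarith
  obtain ⟨N, hN⟩ := eventually_atTop.1
    (eventually_pow_mul_le_rpow_two_pow hC (mul_pos hC hψT) (Real.one_lt_rpow hT1 hε))
  filter_upwards [(Real.tendsto_logb_atTop hT1).eventually_ge_atTop (max 1 (2 ^ N)),
    eventually_gt_atTop 0] with t hlogb ht
  -- locate `t` dyadically: `T ^ 2 ^ n ≤ t < T ^ 2 ^ (n + 1)`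
  obtain ⟨n, hn, hn'⟩ := exists_nat_pow_near (le_of_max_le_left hlogb) one_lt_two
  have hNn : N ≤ n := by
    have := (pow_lt_pow_iff_right₀ one_lt_two).1 ((le_of_max_le_right hlogb).trans_lt hn')
    omega
  rw [Real.le_logb_iff_rpow_le hT1 ht] at hn
  rw [Real.logb_lt_iff_lt_rpow hT1 ht] at hn'
  calc ψ t ≤ ψ (T ^ (2 : ℝ) ^ (n + 1)) := hmono ht.le (by simp; positivity) hn'.le
    _ ≤ C ^ (n + 1) * ψ T :=
        apply_rpow_two_pow_le hC.le hT1.le (fun t ht => (hT t ht).1) (n + 1)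
    _ = C ^ n * (C * ψ T) := by ring
    _ ≤ (T ^ ε) ^ (2 : ℝ) ^ n := hN n hNn
    _ = (T ^ (2 : ℝ) ^ n) ^ ε := by
        rw [← Real.rpow_mul (by linarith), ← Real.rpow_mul (by linarith), mul_comm]
    _ ≤ t ^ ε := Real.rpow_le_rpow (by positivity) hn hε.le

end Growth

section PowerRatios

variable {ψ : ℝ → ℝ}

lemma tendsto_rpow_mul_div (hψ : ∀ᶠ t in atTop, ψ t ≠ 0) {β γ L₁ L₂ : ℝ} (hβ : 0 < β)
    (h₁ : Tendsto (fun t => ψ (t ^ β) / ψ t) atTop (𝓝 L₁))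
    (h₂ : Tendsto (fun t => ψ (t ^ γ) / ψ t) atTop (𝓝 L₂)) :
    Tendsto (fun t => ψ (t ^ (β * γ)) / ψ t) atTop (𝓝 (L₂ * L₁)) := by
  refine ((h₂.comp (tendsto_rpow_atTop hβ)).mul h₁).congr' ?_
  filter_upwards [eventually_ge_atTop 0, (tendsto_rpow_atTop hβ).eventually hψ]
    with t ht hψβ
  simp only [Function.comp_apply, Real.rpow_mul ht, div_mul_div_cancel₀ hψβ]

lemma tendsto_rpow_pow_div (hψ : ∀ᶠ t in atTop, ψ t ≠ 0) {β L : ℝ} (hβ : 0 < β)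
    (h : Tendsto (fun t => ψ (t ^ β) / ψ t) atTop (𝓝 L)) (k : ℕ) :
    Tendsto (fun t => ψ (t ^ (β ^ k)) / ψ t) atTop (𝓝 (L ^ k)) := by
  induction k with
  | zero =>
    simp only [pow_zero, Real.rpow_one]
    exact tendsto_const_nhds.congr' (hψ.mono fun t ht => (div_self ht).symm)
  | succ k ih =>
    rw [pow_succ', pow_succ]
    exact tendsto_rpow_mul_div hψ hβ h ih

lemma exists_one_lt_tendsto_rpow_div_lt (hψ : ∀ᶠ t in atTop, ψ t ≠ 0)
    (h : ∀ α > (1 : ℝ), ∃ L : ℝ, Tendsto (fun t => ψ (t ^ α) / ψ t) atTop (𝓝 L))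
    {b : ℝ} (hb : 1 < b) :
    ∃ β > (1 : ℝ), ∃ L < b, Tendsto (fun t => ψ (t ^ β) / ψ t) atTop (𝓝 L) := by
  obtain ⟨L₂, hL₂⟩ := h 2 one_lt_two
  obtain ⟨m, hm⟩ := pow_unbounded_of_one_lt L₂ hb
  have hβ : 1 < (2 : ℝ) ^ ((m + 1 : ℕ) : ℝ)⁻¹ := Real.one_lt_rpow one_lt_two (by positivity)
  obtain ⟨L, hL⟩ := h _ hβ
  refine ⟨_, hβ, L, ?_, hL⟩
  have hpow : L ^ (m + 1) = L₂ := by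
    refine tendsto_nhds_unique (tendsto_rpow_pow_div hψ (by positivity) hL (m + 1)) ?_
    rwa [Real.rpow_inv_natCast_pow zero_le_two m.succ_ne_zero]
  refine lt_of_pow_lt_pow_left₀ (m + 1) (by linarith) ?_
  rw [hpow]
  exact hm.trans_le (pow_le_pow_right₀ hb.le m.le_succ)

end PowerRatios

section Main

variable {ψ : ℝ → ℝ}

theorem MonotoneOn.tendsto_mul_self_div_of_forall_tendsto_rpow_div
    (hmono : MonotoneOn ψ (Ici 0)) (htop : Tendsto ψ atTop atTop)
    (h : ∀ α > (1 : ℝ), ∃ L : ℝ, Tendsto (fun t => ψ (t ^ α) / ψ t) atTop (𝓝 L)) :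
    Tendsto (fun t => ψ (t * ψ t) / ψ t) atTop (𝓝 1) := by
  have hψ1 := htop.eventually_ge_atTop 1
  have hψ : ∀ᶠ t in atTop, ψ t ≠ 0 := (htop.eventually_gt_atTop 0).mono fun _ h => h.ne'
  refine tendsto_order.2 ⟨fun a ha => ?_, fun b hb => ?_⟩
  · filter_upwards [hψ1, eventually_ge_atTop 0] with t h1 ht
    exact ha.trans_le ((one_le_div (by linarith)).2
      (hmono ht (by simp; positivity) (le_mul_of_one_le_right ht h1)))
  obtain ⟨β, hβ, L, hLb, hL⟩ := exists_one_lt_tendsto_rpow_div_lt hψ h hb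
  obtain ⟨L₂, hL₂⟩ := h 2 one_lt_two
  have hsq : ∀ᶠ t in atTop, ψ (t ^ 2) ≤ (L₂ + 1) * ψ t := by
    filter_upwards [hL₂.eventually_lt_const (lt_add_one L₂), htop.eventually_gt_atTop 0]
      with t hlt hψt
    rw [Real.rpow_two, div_lt_iff₀ hψt] at hlt
    exact hlt.le
  filter_upwards [hL.eventually_lt_const hLb, hψ1, eventually_gt_atTop 0,
    hmono.eventually_le_rpow_of_eventually_sq_le htop hsq (sub_pos.2 hβ)] with t hlt h1 ht hgrow
  have hup : t * ψ t ≤ t ^ β := by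
    calc t * ψ t ≤ t * t ^ (β - 1) := mul_le_mul_of_nonneg_left hgrow ht.le
      _ = t ^ β := by rw [Real.rpow_sub_one ht.ne', mul_div_cancel₀ _ ht.ne']
  calc ψ (t * ψ t) / ψ t ≤ ψ (t ^ β) / ψ t :=
        div_le_div_of_nonneg_right (hmono (by simp; positivity) (by simp; positivity) hup)
          (by linarith)
    _ < b := hlt

theorem MonotoneOn.tendsto_mul_div_of_tendsto_mul_self_div
    (hmono : MonotoneOn ψ (Ici 0)) (htop : Tendsto ψ atTop atTop)
    (h : Tendsto (fun t => ψ (t * ψ t) / ψ t) atTop (𝓝 1)) {a : ℝ} (ha : 1 ≤ a) :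
    Tendsto (fun t => ψ (a * t) / ψ t) atTop (𝓝 1) := by
  have ha₀ : 0 ≤ a := zero_le_one.trans ha
  refine tendsto_of_tendsto_of_tendsto_of_le_of_le' tendsto_const_nhds h ?_ ?_
  · filter_upwards [htop.eventually_gt_atTop 0, eventually_ge_atTop 0] with t hψ ht
    exact (one_le_div hψ).2
      (hmono ht (mul_nonneg ha₀ ht) (le_mul_of_one_le_left ht ha))
  · filter_upwards [htop.eventually_ge_atTop a, eventually_ge_atTop 0] with t hψa ht
    have hψ : 0 ≤ ψ t := ha₀.trans hψa
    refine div_le_div_of_nonneg_right (hmono (mul_nonneg ha₀ ht) (mul_nonneg ht hψ) ?_) hψ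
    rw [mul_comm a]
    exact mul_le_mul_of_nonneg_left hψa ht

end Main

theorem stmt2_general
    (ψ : ℝ → ℝ)
    (hmono : MonotoneOn ψ (Set.Ici 0))
    (htop : Tendsto ψ atTop atTop) :
    ((∀ α > (1:ℝ), ∃ L : ℝ, Tendsto (fun t => ψ (t ^ α) / ψ t) atTop (𝓝 L)) →
      Tendsto (fun t => ψ (t * ψ t) / ψ t) atTop (𝓝 1)) ∧
    (Tendsto (fun t => ψ (t * ψ t) / ψ t) atTop (𝓝 1) →
      ∀ a > (1:ℝ), Tendsto (fun t => ψ (a * t) / ψ t) atTop (𝓝 1)) :=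
  ⟨hmono.tendsto_mul_self_div_of_forall_tendsto_rpow_div htop,
    fun h _ ha => hmono.tendsto_mul_div_of_tendsto_mul_self_div htop h ha.le⟩

/-- For `ψ ∈ Ω`:
(1) if `lim_{t→∞} ψ(t^α)/ψ(t)` exists (finite) for every `α > 1`, then
`ψ(t·ψ(t))/ψ(t) → 1`;
(2) if `ψ(t·ψ(t))/ψ(t) → 1`, then `ψ(at)/ψ(t) → 1` for every `a > 1`. -/
theorem stmt2
    (ψ : ℝ → ℝ)
    (hmono : MonotoneOn ψ (Set.Ici 0))
    (hconc : ConcaveOn ℝ (Set.Ici 0) ψ)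
    (hzero : ψ 0 = 0)
    (hnonneg : ∀ t ≥ (0:ℝ), 0 ≤ ψ t)
    (htop : Tendsto ψ atTop atTop) :
    ((∀ α > (1:ℝ), ∃ L : ℝ, Tendsto (fun t => ψ (t ^ α) / ψ t) atTop (𝓝 L)) →
      Tendsto (fun t => ψ (t * ψ t) / ψ t) atTop (𝓝 1)) ∧
    (Tendsto (fun t => ψ (t * ψ t) / ψ t) atTop (𝓝 1) →
      ∀ a > (1:ℝ), Tendsto (fun t => ψ (a * t) / ψ t) atTop (𝓝 1)) :=
  stmt2_general ψ hmono htop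
end

section
/- Fix β ∈ (0,1) and let ψ_β(t) := exp((log t)^β) for t ≥ e. Then: (a) for every a > 1, lim_{t→∞} ψ_β(at)/ψ_β(t) = 1, i.e. lim_{t→∞} exp((log(at))^β − (log t)^β) = 1; (b) the limit lim_{t→∞} ψ_β(t·ψ_β(t))/ψ_β(t) = lim_{t→∞} exp((log t + (log t)^β)^β − (log t)^β) equals 1 if β ∈ (0,1/2), equals e^{1/2} if β = 1/2, and equals +∞ if β ∈ (1/2,1); (c) for every α > 1, lim_{t→∞} ψ_β(t^α)/ψ_β(t) = lim_{t→∞} exp((α^β − 1)(log t)^β) = +∞. -/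
/-! With `x = log t`, each ratio is `exp` of a function of `x`. In (a) and (b) it is an increment
`(x + c) ^ β - x ^ β` of a concave power; the tangent lines at both ends squeeze it to
`β c x ^ (β - 1)` as soon as `c = o(x)`. For `c = log a` this tends to `0`; for `c = x ^ β` it is
`β x ^ (2β - 1)`, which tends to `0`, equals `1/2` or tends to `∞` according as `β` is below, at or
above `1/2`. In (c) the exponent is `(α ^ β - 1) x ^ β → ∞`. -/

open Filter Set Topology

/-- The function `ψ_β(t) = exp((log t)^β)` (relevant for `t ≥ e`). -/
noncomputable def psiB (β : ℝ) : ℝ → ℝ := fun t => Real.exp (Real.log t ^ β)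

open Real Asymptotics

lemma tendsto_rpow_atTop_nhds_zero_of_neg {y : ℝ} (hy : y < 0) :
    Tendsto (fun x : ℝ => x ^ y) atTop (𝓝 0) := by
  simpa using tendsto_rpow_neg_atTop (neg_pos.2 hy)

lemma rpow_le_rpow_add_mul_sub {β x y : ℝ} (hβ0 : 0 ≤ β) (hβ1 : β ≤ 1) (hx : 0 < x)
    (hy : 0 ≤ y) : y ^ β ≤ x ^ β + β * x ^ (β - 1) * (y - x) := by
  have hs : -1 ≤ (y - x) / x := by rw [le_div_iff₀ hx]; linarith
  calc y ^ β = (x * (1 + (y - x) / x)) ^ β := by congr 1; field_simp; ring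
    _ = x ^ β * (1 + (y - x) / x) ^ β := mul_rpow hx.le (by linarith)
    _ ≤ x ^ β * (1 + β * ((y - x) / x)) := by
      gcongr; exact rpow_one_add_le_one_add_mul_self hs hβ0 hβ1
    _ = x ^ β + β * x ^ (β - 1) * (y - x) := by rw [rpow_sub_one hx.ne']; field_simp

lemma isEquivalent_rpow_add_sub_rpow {β : ℝ} (hβ0 : 0 < β) (hβ1 : β ≤ 1) {c : ℝ → ℝ}
    (hc : ∀ᶠ x in atTop, 0 < c x) (hcx : Tendsto (fun x => c x / x) atTop (𝓝 0)) :
    (fun x => (x + c x) ^ β - x ^ β) ~[atTop] fun x => β * c x * x ^ (β - 1) := by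
  refine isEquivalent_of_tendsto_one ?_
  have hlow : Tendsto (fun x => (1 + c x / x) ^ (β - 1)) atTop (𝓝 1) := by
    simpa using (tendsto_const_nhds.add hcx).rpow_const (Or.inl (by norm_num : (1:ℝ) + 0 ≠ 0))
  refine tendsto_of_tendsto_of_tendsto_of_le_of_le' hlow tendsto_const_nhds ?_ ?_ <;>
    filter_upwards [hc, eventually_gt_atTop 0] with x hcpos hx <;>
    have hv : 0 < β * c x * x ^ (β - 1) := by positivity
  · have hxc : (1 + c x / x) ^ (β - 1) * x ^ (β - 1) = (x + c x) ^ (β - 1) := by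
      rw [← mul_rpow (by positivity) hx.le]; congr 1; field_simp
    have := rpow_le_rpow_add_mul_sub hβ0.le hβ1 (by positivity : 0 < x + c x) hx.le
    rw [Pi.div_apply, le_div_iff₀ hv]
    calc (1 + c x / x) ^ (β - 1) * (β * c x * x ^ (β - 1))
        = β * c x * (x + c x) ^ (β - 1) := by rw [← hxc]; ring
      _ ≤ (x + c x) ^ β - x ^ β := by linarith
  · have := rpow_le_rpow_add_mul_sub hβ0.le hβ1 hx (by positivity : 0 ≤ x + c x)
    rw [add_sub_cancel_left] at this
    rw [Pi.div_apply, div_le_one hv]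
    linarith

lemma tendsto_add_rpow_sub_rpow {β c : ℝ} (hβ0 : 0 < β) (hβ1 : β < 1) (hc : 0 < c) :
    Tendsto (fun x => (c + x) ^ β - x ^ β) atTop (𝓝 0) := by
  have h := isEquivalent_rpow_add_sub_rpow hβ0 hβ1.le (c := fun _ => c)
    (Eventually.of_forall fun _ => hc) (tendsto_const_nhds.div_atTop tendsto_id)
  have hv := (tendsto_rpow_atTop_nhds_zero_of_neg (by linarith : β - 1 < 0)).const_mul (β * c)
  rw [mul_zero] at hv
  simpa only [add_comm c] using h.symm.tendsto_nhds hv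

lemma isEquivalent_add_rpow_rpow_sub_rpow {β : ℝ} (hβ0 : 0 < β) (hβ1 : β < 1) :
    (fun x => (x + x ^ β) ^ β - x ^ β) ~[atTop] fun x => β * x ^ (2 * β - 1) := by
  have hcx : Tendsto (fun x : ℝ => x ^ β / x) atTop (𝓝 0) :=
    (tendsto_rpow_atTop_nhds_zero_of_neg (by linarith : β - 1 < 0)).congr'
      (by filter_upwards [eventually_gt_atTop 0] with x hx using rpow_sub_one hx.ne' β)
  refine (isEquivalent_rpow_add_sub_rpow hβ0 hβ1.le
    (eventually_gt_atTop 0 |>.mono fun x hx => rpow_pos_of_pos hx β) hcx).congr_right ?_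
  filter_upwards [eventually_gt_atTop 0] with x hx
  rw [mul_assoc, ← rpow_add hx]; ring_nf

lemma psiB_mul_div_psiB (β a t : ℝ) :
    psiB β (a * t) / psiB β t = exp (log (a * t) ^ β - log t ^ β) := by
  simp only [psiB, exp_sub]

lemma psiB_mul_psiB_div_psiB (β : ℝ) {t : ℝ} (ht : 0 < t) :
    psiB β (t * psiB β t) / psiB β t = exp ((log t + log t ^ β) ^ β - log t ^ β) := by
  simp only [psiB]
  rw [← exp_sub, log_mul ht.ne' (exp_ne_zero _), log_exp]

lemma psiB_rpow_div_psiB (β : ℝ) {α t : ℝ} (hα : 0 ≤ α) (ht : 1 ≤ t) :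
    psiB β (t ^ α) / psiB β t = exp ((α ^ β - 1) * log t ^ β) := by
  simp only [psiB]
  rw [← exp_sub, log_rpow (by linarith), mul_rpow hα (log_nonneg ht), sub_mul, one_mul]

lemma tendsto_psiB_mul_div_psiB {β a : ℝ} (hβ0 : 0 < β) (hβ1 : β < 1) (ha : 1 < a) :
    Tendsto (fun t => psiB β (a * t) / psiB β t) atTop (𝓝 1) ∧
    Tendsto (fun t => exp (log (a * t) ^ β - log t ^ β)) atTop (𝓝 1) := by
  have h := (continuous_exp.tendsto 0).comp
    ((tendsto_add_rpow_sub_rpow hβ0 hβ1 (log_pos ha)).comp tendsto_log_atTop)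
  rw [exp_zero] at h
  replace h : Tendsto (fun t => exp (log (a * t) ^ β - log t ^ β)) atTop (𝓝 1) := by
    refine h.congr' ?_
    filter_upwards [eventually_gt_atTop 0] with t ht
    rw [Function.comp_apply, Function.comp_apply, log_mul (by linarith) ht.ne']
  exact ⟨h.congr fun t => (psiB_mul_div_psiB β a t).symm, h⟩

lemma tendsto_psiB_mul_psiB_div_psiB {β : ℝ} {l l' : Filter ℝ}
    (hg : Tendsto (fun x => (x + x ^ β) ^ β - x ^ β) atTop l) (hexp : Tendsto exp l l') :
    Tendsto (fun t => psiB β (t * psiB β t) / psiB β t) atTop l' ∧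
    Tendsto (fun t => exp ((log t + log t ^ β) ^ β - log t ^ β)) atTop l' := by
  have h := hexp.comp (hg.comp tendsto_log_atTop)
  refine ⟨h.congr' ?_, h⟩
  filter_upwards [eventually_gt_atTop 0] with t ht using (psiB_mul_psiB_div_psiB β ht).symm

lemma tendsto_psiB_rpow_div_psiB {β α : ℝ} (hβ0 : 0 < β) (hα : 1 < α) :
    Tendsto (fun t => psiB β (t ^ α) / psiB β t) atTop atTop ∧
    Tendsto (fun t => exp ((α ^ β - 1) * log t ^ β)) atTop atTop := by
  have h := tendsto_exp_atTop.comp (((tendsto_rpow_atTop hβ0).const_mul_atTop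
    (sub_pos.2 (one_lt_rpow hα hβ0))).comp tendsto_log_atTop)
  refine ⟨h.congr' ?_, h⟩
  filter_upwards [eventually_ge_atTop 1] with t ht using
    (psiB_rpow_div_psiB β (by linarith) ht).symm

/-- For `β ∈ (0,1)` and `ψ_β(t) = exp((log t)^β)`:
(a) `ψ_β(at)/ψ_β(t) → 1` for every `a > 1`;
(b) `ψ_β(t·ψ_β(t))/ψ_β(t) = exp((log t + (log t)^β)^β − (log t)^β)` tends to `1` if
`β ∈ (0,1/2)`, to `e^{1/2}` if `β = 1/2`, and to `+∞` if `β ∈ (1/2,1)`;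
(c) `ψ_β(t^α)/ψ_β(t) = exp((α^β − 1)(log t)^β) → +∞` for every `α > 1`. -/
theorem stmt3 (β : ℝ) (hβ : β ∈ Set.Ioo (0:ℝ) 1) :
    (∀ a > (1:ℝ),
      Tendsto (fun t => psiB β (a * t) / psiB β t) atTop (𝓝 1) ∧
      Tendsto (fun t => Real.exp (Real.log (a * t) ^ β - Real.log t ^ β)) atTop (𝓝 1)) ∧
    ((β < 1/2 →
        Tendsto (fun t => psiB β (t * psiB β t) / psiB β t) atTop (𝓝 1) ∧
        Tendsto (fun t =>
          Real.exp ((Real.log t + Real.log t ^ β) ^ β - Real.log t ^ β)) atTop (𝓝 1)) ∧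
      (β = 1/2 →
        Tendsto (fun t => psiB β (t * psiB β t) / psiB β t) atTop (𝓝 (Real.exp (1/2))) ∧
        Tendsto (fun t =>
          Real.exp ((Real.log t + Real.log t ^ β) ^ β - Real.log t ^ β)) atTop
          (𝓝 (Real.exp (1/2)))) ∧
      (1/2 < β →
        Tendsto (fun t => psiB β (t * psiB β t) / psiB β t) atTop atTop ∧
        Tendsto (fun t =>
          Real.exp ((Real.log t + Real.log t ^ β) ^ β - Real.log t ^ β)) atTop atTop)) ∧
    (∀ α > (1:ℝ),
      Tendsto (fun t => psiB β (t ^ α) / psiB β t) atTop atTop ∧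
      Tendsto (fun t => Real.exp ((α ^ β - 1) * Real.log t ^ β)) atTop atTop) := by
  obtain ⟨hβ0, hβ1⟩ := hβ
  have hE := isEquivalent_add_rpow_rpow_sub_rpow hβ0 hβ1
  refine ⟨fun a ha => tendsto_psiB_mul_div_psiB hβ0 hβ1 ha,
    ⟨fun hβ2 => ?_, fun hβ2 => ?_, fun hβ2 => ?_⟩, fun α hα => tendsto_psiB_rpow_div_psiB hβ0 hα⟩
  · have hv := (tendsto_rpow_atTop_nhds_zero_of_neg (by linarith : 2 * β - 1 < 0)).const_mul β
    rw [mul_zero] at hv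
    simpa using tendsto_psiB_mul_psiB_div_psiB (hE.symm.tendsto_nhds hv) (continuous_exp.tendsto 0)
  · subst hβ2
    norm_num at hE
    exact tendsto_psiB_mul_psiB_div_psiB (hE.symm.tendsto_nhds tendsto_const_nhds)
      (continuous_exp.tendsto _)
  · exact tendsto_psiB_mul_psiB_div_psiB (hE.symm.tendsto_atTop
      ((tendsto_rpow_atTop (by linarith)).const_mul_atTop hβ0)) tendsto_exp_atTop
end

section
/- Let ψ ∈ Ω. Then the following two conditions are equivalent: (i) for every ε > 0 there exists C > 0 such that ψ(st) ≤ C·s^ε·ψ(t) for all t > 0 and all s > 1; (ii) for every ε > 0 there exists a > 1 such that ψ(at) ≤ a^ε·ψ(t) for all t > 0. -/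
/-!
(i) ⇒ (ii): apply (i) with `ε / 2` and take `a` so large that the constant `C` is absorbed
into `a ^ (ε / 2)`.
(ii) ⇒ (i): iterating (ii) gives `ψ (a ^ n * t) ≤ (a ^ n) ^ ε * ψ t`; for `s > 1` pick the
power with `s ≤ a ^ n ≤ a * s` and use monotonicity, which costs the constant `a ^ ε`.
-/

open Filter Set Topology

theorem apply_pow_mul_le_pow_mul {f : ℝ → ℝ} {a K : ℝ} (ha : 0 < a) (hK : 0 ≤ K)
    (h : ∀ t > 0, f (a * t) ≤ K * f t) (n : ℕ) {t : ℝ} (ht : 0 < t) :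
    f (a ^ n * t) ≤ K ^ n * f t := by
  induction n with
  | zero => simp
  | succ n ih =>
    calc f (a ^ (n + 1) * t) = f (a * (a ^ n * t)) := by ring_nf
      _ ≤ K * f (a ^ n * t) := h _ (by positivity)
      _ ≤ K * (K ^ n * f t) := mul_le_mul_of_nonneg_left ih hK
      _ = K ^ (n + 1) * f t := by ring

theorem exists_pow_mem_Icc_mul {a s : ℝ} (ha : 1 < a) (hs : 1 ≤ s) :
    ∃ n : ℕ, s ≤ a ^ n ∧ a ^ n ≤ a * s := by
  obtain ⟨n, hle, hlt⟩ := exists_nat_pow_near hs ha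
  refine ⟨n + 1, hlt.le, ?_⟩
  rw [pow_succ']
  exact mul_le_mul_of_nonneg_left hle (by linarith)

theorem exists_le_rpow_two_mul_of_le_mul_rpow {ψ : ℝ → ℝ} {C δ : ℝ} (hC : 0 ≤ C) (hδ : 0 < δ)
    (hnonneg : ∀ t > 0, 0 ≤ ψ t) (h : ∀ t > 0, ∀ s > 1, ψ (s * t) ≤ C * s ^ δ * ψ t) :
    ∃ a > 1, ∀ t > 0, ψ (a * t) ≤ a ^ (2 * δ) * ψ t := by
  set a := max 2 (C ^ δ⁻¹)
  have ha : 1 < a := one_lt_two.trans_le (le_max_left _ _)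
  have hCa : C ≤ a ^ δ :=
    (Real.rpow_inv_le_iff_of_pos hC (by positivity) hδ).1 (le_max_right _ _)
  refine ⟨a, ha, fun t ht => ?_⟩
  calc ψ (a * t) ≤ C * a ^ δ * ψ t := h t ht a ha
    _ ≤ a ^ δ * a ^ δ * ψ t := by gcongr; exact hnonneg t ht
    _ = a ^ (2 * δ) * ψ t := by rw [two_mul, Real.rpow_add (by positivity)]

theorem le_mul_rpow_of_le_rpow_mul {ψ : ℝ → ℝ} {a ε : ℝ} (ha : 1 < a) (hε : 0 ≤ ε)
    (hmono : MonotoneOn ψ (Ioi 0)) (hnonneg : ∀ t > 0, 0 ≤ ψ t)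
    (h : ∀ t > 0, ψ (a * t) ≤ a ^ ε * ψ t) :
    ∀ t > 0, ∀ s > 1, ψ (s * t) ≤ a ^ ε * s ^ ε * ψ t := by
  intro t ht s hs
  have ha₀ : 0 < a := by linarith
  obtain ⟨n, hsn, hns⟩ := exists_pow_mem_Icc_mul ha hs.le
  calc ψ (s * t) ≤ ψ (a ^ n * t) :=
        hmono (by simp only [mem_Ioi]; positivity) (by simp only [mem_Ioi]; positivity)
          (by gcongr)
    _ ≤ (a ^ ε) ^ n * ψ t := apply_pow_mul_le_pow_mul ha₀ (by positivity) h n ht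
    _ = (a ^ n) ^ ε * ψ t := by
          rw [← Real.rpow_natCast, ← Real.rpow_natCast, ← Real.rpow_mul ha₀.le,
            ← Real.rpow_mul ha₀.le, mul_comm ε]
    _ ≤ (a * s) ^ ε * ψ t := by gcongr; exact hnonneg t ht
    _ = a ^ ε * s ^ ε * ψ t := by rw [Real.mul_rpow ha₀.le (by linarith)]

theorem stmt6_general
    (ψ : ℝ → ℝ)
    (hmono : MonotoneOn ψ (Set.Ici 0))
    (hnonneg : ∀ t ≥ (0:ℝ), 0 ≤ ψ t) :
    (∀ ε > (0:ℝ), ∃ C > (0:ℝ), ∀ t > (0:ℝ), ∀ s > (1:ℝ), ψ (s * t) ≤ C * s ^ ε * ψ t) ↔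
    (∀ ε > (0:ℝ), ∃ a > (1:ℝ), ∀ t > (0:ℝ), ψ (a * t) ≤ a ^ ε * ψ t) := by
  have hpos : ∀ t > (0:ℝ), 0 ≤ ψ t := fun t ht => hnonneg t ht.le
  constructor
  · intro h ε hε
    obtain ⟨C, hC, hψ⟩ := h (ε / 2) (by positivity)
    simpa only [mul_div_cancel₀ ε two_ne_zero] using
      exists_le_rpow_two_mul_of_le_mul_rpow hC.le (by positivity) hpos hψ
  · intro h ε hε
    obtain ⟨a, ha, hψ⟩ := h ε hε
    exact ⟨a ^ ε, by positivity,
      le_mul_rpow_of_le_rpow_mul ha hε.le (hmono.mono Ioi_subset_Ici_self) hpos hψ⟩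

/-- For `ψ ∈ Ω`, the following are equivalent:
(i) for every `ε > 0` there is `C > 0` with `ψ(st) ≤ C s^ε ψ(t)` for all `t > 0`, `s > 1`;
(ii) for every `ε > 0` there is `a > 1` with `ψ(at) ≤ a^ε ψ(t)` for all `t > 0`. -/
theorem stmt6
    (ψ : ℝ → ℝ)
    (hmono : MonotoneOn ψ (Set.Ici 0))
    (hconc : ConcaveOn ℝ (Set.Ici 0) ψ)
    (hzero : ψ 0 = 0)
    (hnonneg : ∀ t ≥ (0:ℝ), 0 ≤ ψ t)
    (htop : Tendsto ψ atTop atTop) :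
    (∀ ε > (0:ℝ), ∃ C > (0:ℝ), ∀ t > (0:ℝ), ∀ s > (1:ℝ), ψ (s * t) ≤ C * s ^ ε * ψ t) ↔
    (∀ ε > (0:ℝ), ∃ a > (1:ℝ), ∀ t > (0:ℝ), ψ (a * t) ≤ a ^ ε * ψ t) :=
  stmt6_general ψ hmono hnonneg
end

section
/- Let ψ ∈ Ω_b be continuously differentiable on (0,∞) with ψ(t) = ∫₀^t ψ'(s) ds for all t ≥ 0, and suppose that for every ε ∈ (0,1) there exists C > 0 such that ψ(t) ≤ C·t^ε for all t > 1. Then ψ' ∈ L^p((0,∞)) for every p > 1, while ∫₀^∞ ψ'(t) dt = ∞ (so ψ' ∉ L¹((0,∞))). -/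
open Filter Set Topology MeasureTheory

/-!
Concavity with `ψ 0 = 0` gives `0 ≤ ψ' t ≤ ψ t / t`. Near `0` the `Ω_b` bound `ψ t ≤ C₀ t` makes `ψ'`
bounded, and at infinity `ψ t ≤ C₁ t ^ ε` gives `ψ' t ≤ C₁ t ^ (ε - 1)`, which lies in `L^p(1, ∞)` as
soon as `(1 - ε) p > 1`; for `p > 1` such an `ε ∈ (0, 1)` exists. On the other hand
`∫₀^T ψ' = ψ T → ∞`, so `ψ'` is not integrable on `(0, ∞)`.
-/

theorem HasDerivAt.nonneg_of_monotoneOn_of_mem_nhds {f : ℝ → ℝ} {f' x : ℝ} {s : Set ℝ}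
    (hd : HasDerivAt f f' x) (hf : MonotoneOn f s) (hs : s ∈ 𝓝 x) : 0 ≤ f' := by
  have hacc : AccPt x (𝓟 s) := by
    simpa using (PerfectSpace.univ_preperfect x (mem_univ x)).nhds_inter hs
  exact hd.hasDerivWithinAt.nonneg_of_monotoneOn hacc hf

theorem ConcaveOn.le_div_of_hasDerivAt {f : ℝ → ℝ} {f' t : ℝ} (hf : ConcaveOn ℝ (Ici 0) f)
    (hf0 : f 0 = 0) (ht : 0 < t) (hd : HasDerivAt f f' t) : f' ≤ f t / t := by
  simpa [slope_def_field, hf0] using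
    hf.le_slope_of_hasDerivAt (mem_Ici.mpr le_rfl) (mem_Ici.mpr ht.le) ht hd

theorem not_integrableOn_Ioi_of_tendsto_intervalIntegral {f : ℝ → ℝ} {a : ℝ}
    (h : Tendsto (fun T ↦ ∫ x in a..T, f x) atTop atTop) : ¬ IntegrableOn f (Ioi a) :=
  fun hf ↦ not_tendsto_nhds_of_tendsto_atTop h _
    (intervalIntegral_tendsto_integral_Ioi a hf tendsto_id)

theorem memLp_restrict_Ioi_zero_of_norm_le_rpow {f : ℝ → ℝ} {p C₀ C₁ r₀ r₁ : ℝ} (hp : 0 < p)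
    (hr₀ : -1 < r₀ * p) (hr₁ : r₁ * p < -1) (hC₀ : 0 ≤ C₀) (hC₁ : 0 ≤ C₁)
    (hf : AEStronglyMeasurable f (volume.restrict (Ioi 0)))
    (h₀ : ∀ t ∈ Ioc 0 1, ‖f t‖ ≤ C₀ * t ^ r₀) (h₁ : ∀ t ∈ Ioi 1, ‖f t‖ ≤ C₁ * t ^ r₁) :
    MemLp f (ENNReal.ofReal p) (volume.restrict (Ioi 0)) := by
  have hpow (C r t : ℝ) (hC : 0 ≤ C) (ht : 0 < t) (hft : ‖f t‖ ≤ C * t ^ r) :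
      ‖‖f t‖ ^ p‖ ≤ C ^ p * t ^ (r * p) := by
    rw [Real.norm_of_nonneg (by positivity), Real.rpow_mul ht.le,
      ← Real.mul_rpow hC (by positivity)]
    exact Real.rpow_le_rpow (norm_nonneg _) hft hp.le
  have hmeas : AEStronglyMeasurable (fun t ↦ ‖f t‖ ^ p) (volume.restrict (Ioi 0)) :=
    (hf.norm.aemeasurable.pow_const p).aestronglyMeasurable
  rw [← integrable_norm_rpow_iff hf (by simpa using hp) ENNReal.ofReal_ne_top,
    ENNReal.toReal_ofReal hp.le, ← Ioc_union_Ioi_eq_Ioi zero_le_one]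
  refine IntegrableOn.union ?_ ?_
  · have hint : IntegrableOn (fun t : ℝ ↦ C₀ ^ p * t ^ (r₀ * p)) (Ioc 0 1) :=
      ((intervalIntegrable_iff_integrableOn_Ioc_of_le zero_le_one).mp
        (intervalIntegral.intervalIntegrable_rpow' hr₀)).const_mul _
    refine hint.mono' (hmeas.mono_set Ioc_subset_Ioi_self) ?_
    filter_upwards [ae_restrict_mem measurableSet_Ioc] with t ht
    exact hpow C₀ r₀ t hC₀ ht.1 (h₀ t ht)
  · have hint : IntegrableOn (fun t : ℝ ↦ C₁ ^ p * t ^ (r₁ * p)) (Ioi 1) :=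
      (integrableOn_Ioi_rpow_of_lt hr₁ one_pos).const_mul _
    refine hint.mono' (hmeas.mono_set (Ioi_subset_Ioi zero_le_one)) ?_
    filter_upwards [ae_restrict_mem measurableSet_Ioi] with t ht
    exact hpow C₁ r₁ t hC₁ (one_pos.trans ht) (h₁ t ht)

theorem stmt7_general
    (ψ ψ' : ℝ → ℝ)
    (hmono : MonotoneOn ψ (Set.Ici 0))
    (hconc : ConcaveOn ℝ (Set.Ici 0) ψ)
    (hzero : ψ 0 = 0)
    (htop : Tendsto ψ atTop atTop)
    (hOb : ∃ C > (0:ℝ), ∀ t ∈ Set.Ioc (0:ℝ) 1, ψ t ≤ C * t)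
    (hderiv : ∀ t ∈ Set.Ioi (0:ℝ), HasDerivAt ψ (ψ' t) t)
    (hcont : ContinuousOn ψ' (Set.Ioi 0))
    (hfund : ∀ t ≥ (0:ℝ), ψ t = ∫ s in (0:ℝ)..t, ψ' s)
    (hweak : ∀ ε ∈ Set.Ioo (0:ℝ) 1, ∃ C > (0:ℝ), ∀ t > (1:ℝ), ψ t ≤ C * t ^ ε) :
    (∀ p : ℝ, 1 < p →
      MemLp ψ' (ENNReal.ofReal p) (volume.restrict (Set.Ioi (0:ℝ)))) ∧
    (∫⁻ t in Set.Ioi (0:ℝ), ENNReal.ofReal (ψ' t)) = ⊤ ∧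
    ¬ MemLp ψ' 1 (volume.restrict (Set.Ioi (0:ℝ))) := by
  have hmeas : AEStronglyMeasurable ψ' (volume.restrict (Ioi 0)) :=
    hcont.aestronglyMeasurable measurableSet_Ioi
  have hnonneg : ∀ t ∈ Ioi (0 : ℝ), 0 ≤ ψ' t := fun t ht ↦
    (hderiv t ht).nonneg_of_monotoneOn_of_mem_nhds hmono (Ici_mem_nhds ht)
  have hbound (t C a : ℝ) (ht : 0 < t) (hψt : ψ t ≤ C * t ^ a) : ‖ψ' t‖ ≤ C * t ^ (a - 1) := by
    rw [Real.norm_of_nonneg (hnonneg t ht), Real.rpow_sub_one ht.ne', ← mul_div_assoc]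
    exact (hconc.le_div_of_hasDerivAt hzero ht (hderiv t ht)).trans (by gcongr)
  have hnot : ¬ IntegrableOn ψ' (Ioi 0) := not_integrableOn_Ioi_of_tendsto_intervalIntegral <|
    htop.congr' <| (eventually_ge_atTop 0).mono hfund
  refine ⟨fun p hp ↦ ?_, ?_, fun h ↦ hnot (memLp_one_iff_integrable.mp h)⟩
  · have hp0 : 0 < p := zero_lt_one.trans hp
    obtain ⟨C₀, hC₀, h₀⟩ := hOb
    -- `ε = (1 - 1/p) / 2` makes `(ε - 1) p = -(p + 1) / 2 < -1`
    have hε : (1 - 1 / p) / 2 ∈ Ioo (0 : ℝ) 1 := by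
      have : 1 / p < 1 := (div_lt_one hp0).mpr hp
      constructor <;> linarith [one_div_pos.mpr hp0]
    obtain ⟨C₁, hC₁, h₁⟩ := hweak _ hε
    refine memLp_restrict_Ioi_zero_of_norm_le_rpow (r₀ := 1 - 1) (r₁ := (1 - 1 / p) / 2 - 1) hp0
      (by simp) ?_ hC₀.le hC₁.le hmeas
      (fun t ht ↦ hbound t C₀ 1 ht.1 (by simpa using h₀ t ht))
      (fun t ht ↦ hbound t C₁ _ (one_pos.trans ht) (h₁ t ht))
    field_simp
    linarith
  · by_contra h
    exact hnot <| (lintegral_ofReal_ne_top_iff_integrable hmeas <|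
      (ae_restrict_mem measurableSet_Ioi).mono hnonneg).mp h

/-- Let `ψ ∈ Ω_b` be continuously differentiable on `(0,∞)` with
`ψ t = ∫₀^t ψ'`, and suppose for every `ε ∈ (0,1)` there is `C > 0` with
`ψ t ≤ C t^ε` for all `t > 1`. Then `ψ' ∈ L^p((0,∞))` for every `p > 1`, while
`∫₀^∞ ψ' = ∞`, i.e. `ψ' ∉ L¹((0,∞))`. -/
theorem stmt7
    (ψ ψ' : ℝ → ℝ)
    (hmono : MonotoneOn ψ (Set.Ici 0))
    (hconc : ConcaveOn ℝ (Set.Ici 0) ψ)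
    (hzero : ψ 0 = 0)
    (hnonneg : ∀ t ≥ (0:ℝ), 0 ≤ ψ t)
    (htop : Tendsto ψ atTop atTop)
    (hOb : ∃ C > (0:ℝ), ∀ t ∈ Set.Ioc (0:ℝ) 1, ψ t ≤ C * t)
    (hderiv : ∀ t ∈ Set.Ioi (0:ℝ), HasDerivAt ψ (ψ' t) t)
    (hcont : ContinuousOn ψ' (Set.Ioi 0))
    (hfund : ∀ t ≥ (0:ℝ), ψ t = ∫ s in (0:ℝ)..t, ψ' s)
    (hweak : ∀ ε ∈ Set.Ioo (0:ℝ) 1, ∃ C > (0:ℝ), ∀ t > (1:ℝ), ψ t ≤ C * t ^ ε) :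
    (∀ p : ℝ, 1 < p →
      MemLp ψ' (ENNReal.ofReal p) (volume.restrict (Set.Ioi (0:ℝ)))) ∧
    (∫⁻ t in Set.Ioi (0:ℝ), ENNReal.ofReal (ψ' t)) = ⊤ ∧
    ¬ MemLp ψ' 1 (volume.restrict (Set.Ioi (0:ℝ))) :=
  stmt7_general ψ ψ' hmono hconc hzero htop hOb hderiv hcont hfund hweak
end

section
/- Let ψ ∈ Ω, let (X,μ) be a σ-finite measure space, and let f : X → [0,∞) be measurable with (using the convention e^{-1/(u·f(x))} := 0 when f(x) = 0) sup_{λ>0} (1/ψ(λ)) ∫₀^λ (∫_X e^{-1/(u·f(x))} dμ(x)) du/u² < ∞. Let g ∈ L^q(X,μ) for some q ∈ (1,∞). Then lim_{λ→∞} (1/ψ(λ)) ∫₁^λ (∫_X g(x)·e^{-1/(t·f(x))} dμ(x)) dt/t² = 0. -/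
/-!
Since `0 ≤ e^{-1/(tf)} ≤ 1`, Hölder's inequality in `x` bounds the inner integral by
`‖g‖_q H(t)^{1/q'}`, where `H(t) = ∫ e^{-1/(tf)} dμ`. Hölder's inequality in `t` for the
measure `dt/t²`, which has mass `1` on `(1, ∞)`, then gives
`∫₁^λ H^{1/q'} dt/t² ≤ (∫₀^λ H dt/t²)^{1/q'} ≤ (C ψ(λ))^{1/q'}`,
so the normalized integral is `O(ψ(λ)^{-1/q})`, which tends to `0` since `ψ → ∞`.
-/

open Filter Set Topology MeasureTheory
open scoped ENNReal NNReal

noncomputable def heatWeight {X : Type*} (f : X → ℝ) (t : ℝ) (x : X) : ℝ :=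
  if f x = 0 then 0 else Real.exp (-(1 / (t * f x)))

section HeatWeight

variable {X : Type*} {f : X → ℝ}

theorem heatWeight_nonneg (t : ℝ) (x : X) : 0 ≤ heatWeight f t x := by
  unfold heatWeight
  split_ifs
  exacts [le_rfl, (Real.exp_pos _).le]

theorem heatWeight_le_one {t : ℝ} (ht : 0 < t) {x : X} (hfx : 0 ≤ f x) :
    heatWeight f t x ≤ 1 := by
  unfold heatWeight
  split_ifs
  · exact zero_le_one
  · exact Real.exp_le_one_iff.2 (neg_nonpos.2 (by positivity))

theorem measurable_heatWeight [MeasurableSpace X] (hf : Measurable f) :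
    Measurable fun p : ℝ × X => heatWeight f p.1 p.2 :=
  Measurable.ite ((hf.comp measurable_snd) (measurableSet_singleton 0)) measurable_const
    (measurable_const.div (measurable_fst.mul (hf.comp measurable_snd))).neg.exp

end HeatWeight

theorem enorm_integral_mul_le_eLpNorm_mul_lintegral_rpow {X : Type*} [MeasurableSpace X]
    {μ : Measure X} {p q : ℝ} (hpq : p.HolderConjugate q) {g w : X → ℝ}
    (hg : AEStronglyMeasurable g μ) (hw : AEMeasurable w μ) (hw0 : ∀ x, 0 ≤ w x)
    (hw1 : ∀ x, w x ≤ 1) :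
    ‖∫ x, g x * w x ∂μ‖ₑ ≤
      eLpNorm g (ENNReal.ofReal p) μ * (∫⁻ x, ENNReal.ofReal (w x) ∂μ) ^ (1 / q) := by
  have heLpNorm :
      eLpNorm g (ENNReal.ofReal p) μ = (∫⁻ x, ‖g x‖ₑ ^ p ∂μ) ^ (1 / p) := by
    rw [eLpNorm_eq_lintegral_rpow_enorm_toReal (by simpa using hpq.pos) ENNReal.ofReal_ne_top,
      ENNReal.toReal_ofReal hpq.nonneg]
  calc ‖∫ x, g x * w x ∂μ‖ₑ ≤ ∫⁻ x, ‖g x‖ₑ * ENNReal.ofReal (w x) ∂μ := by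
        refine (enorm_integral_le_lintegral_enorm _).trans_eq (lintegral_congr fun x => ?_)
        rw [enorm_mul, Real.enorm_of_nonneg (hw0 x)]
    _ ≤ (∫⁻ x, ‖g x‖ₑ ^ p ∂μ) ^ (1 / p) *
          (∫⁻ x, ENNReal.ofReal (w x) ^ q ∂μ) ^ (1 / q) :=
        ENNReal.lintegral_mul_le_Lp_mul_Lq μ hpq hg.enorm hw.ennreal_ofReal
    _ ≤ _ := by
        rw [heLpNorm]
        gcongr _ * ?_
        refine ENNReal.rpow_le_rpow (lintegral_mono fun x => ?_) (by simpa using hpq.symm.nonneg)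
        simpa using ENNReal.rpow_le_rpow_of_exponent_ge (ENNReal.ofReal_le_one.2 (hw1 x))
          hpq.symm.lt.le

theorem lintegral_rpow_mul_le {α : Type*} [MeasurableSpace α] (ν : Measure α) {p q : ℝ}
    (hpq : p.HolderConjugate q) {H b : α → ℝ≥0∞} (hH : AEMeasurable H ν)
    (hb : AEMeasurable b ν) :
    ∫⁻ a, H a ^ (1 / q) * b a ∂ν ≤
      (∫⁻ a, H a * b a ∂ν) ^ (1 / q) * (∫⁻ a, b a ∂ν) ^ (1 / p) := by
  have hsplit : ∀ a, H a ^ (1 / q) * b a = (H a * b a) ^ (1 / q) * b a ^ (1 / p) := by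
    intro a
    rw [ENNReal.mul_rpow_of_nonneg _ _ (by simpa using hpq.symm.nonneg), mul_assoc,
      ← ENNReal.rpow_add_of_nonneg _ _ (by simpa using hpq.symm.nonneg)
        (by simpa using hpq.nonneg), hpq.symm.one_div_add_one_div, div_one, ENNReal.rpow_one]
  calc ∫⁻ a, H a ^ (1 / q) * b a ∂ν
      = ∫⁻ a, ((fun a => (H a * b a) ^ (1 / q)) * fun a => b a ^ (1 / p)) a ∂ν :=
        lintegral_congr hsplit
    _ ≤ _ := ENNReal.lintegral_mul_le_Lp_mul_Lq ν hpq.symm ((hH.mul hb).pow_const _)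
        (hb.pow_const _)
    _ = _ := by
        simp only [one_div, ENNReal.rpow_inv_rpow hpq.symm.ne_zero,
          ENNReal.rpow_inv_rpow hpq.ne_zero]

theorem lintegral_Ioi_one_inv_ofReal_sq :
    ∫⁻ t in Ioi (1 : ℝ), (ENNReal.ofReal (t ^ 2))⁻¹ = 1 := by
  have hrpow : ∀ t ∈ Ioi (1 : ℝ),
      (ENNReal.ofReal (t ^ 2))⁻¹ = ENNReal.ofReal (t ^ (-2 : ℝ)) := by
    intro t ht
    have ht0 : 0 < t := zero_lt_one.trans ht
    rw [← ENNReal.ofReal_inv_of_pos (by positivity), Real.rpow_neg ht0.le, Real.rpow_two]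
  rw [setLIntegral_congr_fun measurableSet_Ioi hrpow,
    ← ofReal_integral_eq_lintegral_ofReal (integrableOn_Ioi_rpow_of_lt (by norm_num) one_pos),
    integral_Ioi_rpow_of_lt (by norm_num) one_pos]
  · norm_num
  · filter_upwards [ae_restrict_mem measurableSet_Ioi] with t ht
    exact Real.rpow_nonneg (zero_lt_one.trans ht).le _

theorem tendsto_div_zero_of_enorm_le_rpow {α : Type*} {l : Filter α} {I ψ : α → ℝ}
    {S : ℝ≥0∞} {C r : ℝ} (hψ : Tendsto ψ l atTop) (hS : S ≠ ∞) (hr0 : 0 ≤ r)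
    (hr1 : r < 1) (hI : ∀ᶠ a in l, ‖I a‖ₑ ≤ S * ENNReal.ofReal (C * ψ a) ^ r) :
    Tendsto (fun a => I a / ψ a) l (𝓝 0) := by
  set K := S.toReal * max C 0 ^ r
  have hdecay : Tendsto (fun a => K * ψ a ^ (r - 1)) l (𝓝 0) := by
    simpa [neg_sub] using
      ((tendsto_rpow_neg_atTop (sub_pos.2 hr1)).comp hψ).const_mul K
  refine squeeze_zero_norm' ?_ hdecay
  filter_upwards [hI, hψ.eventually_gt_atTop 0] with a ha hψa
  have hCψ : 0 ≤ max C 0 * ψ a := mul_nonneg (le_max_right _ _) hψa.le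
  have hbound : ‖I a‖ ≤ S.toReal * (max C 0 * ψ a) ^ r := by
    have hle : ‖I a‖ₑ ≤ S * ENNReal.ofReal ((max C 0 * ψ a) ^ r) := by
      refine ha.trans (mul_le_mul_right ?_ S)
      rw [← ENNReal.ofReal_rpow_of_nonneg hCψ hr0]
      exact ENNReal.rpow_le_rpow (ENNReal.ofReal_le_ofReal
        (mul_le_mul_of_nonneg_right (le_max_left _ _) hψa.le)) hr0
    simpa [ENNReal.toReal_mul, Real.rpow_nonneg hCψ] using
      ENNReal.toReal_mono (ENNReal.mul_ne_top hS ENNReal.ofReal_ne_top) hle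
  rw [Real.mul_rpow (le_max_right _ _) hψa.le] at hbound
  rw [norm_div, Real.norm_of_nonneg hψa.le, div_le_iff₀ hψa]
  calc ‖I a‖ ≤ S.toReal * (max C 0 ^ r * ψ a ^ r) := hbound
    _ = K * ψ a ^ (r - 1) * ψ a := by
        rw [Real.rpow_sub_one hψa.ne', mul_assoc, div_mul_cancel₀ _ hψa.ne', ← mul_assoc]

theorem enorm_intervalIntegral_heatWeight_le {X : Type*} [MeasurableSpace X] {μ : Measure X}
    [SFinite μ] {f g : X → ℝ} (hf : Measurable f) (hf0 : ∀ x, 0 ≤ f x)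
    (hg : AEStronglyMeasurable g μ) {p q : ℝ} (hpq : p.HolderConjugate q) {lam : ℝ}
    (hlam : 1 ≤ lam) :
    ‖∫ t in (1 : ℝ)..lam, (∫ x, g x * heatWeight f t x ∂μ) / t ^ 2‖ₑ ≤
      eLpNorm g (ENNReal.ofReal p) μ *
        (∫⁻ t in Ioc 0 lam, (∫⁻ x, ENNReal.ofReal (heatWeight f t x) ∂μ) /
          ENNReal.ofReal (t ^ 2)) ^ (1 / q) := by
  set H : ℝ → ℝ≥0∞ := fun t => ∫⁻ x, ENNReal.ofReal (heatWeight f t x) ∂μ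
  set b : ℝ → ℝ≥0∞ := fun t => (ENNReal.ofReal (t ^ 2))⁻¹
  have hH : Measurable H :=
    (ENNReal.measurable_ofReal.comp (measurable_heatWeight hf)).lintegral_prod_right'
  have hb : Measurable b :=
    (ENNReal.measurable_ofReal.comp (measurable_id.pow_const 2)).inv
  have hpointwise : ∀ t ∈ Ioc 1 lam,
      ‖(∫ x, g x * heatWeight f t x ∂μ) / t ^ 2‖ₑ ≤
        eLpNorm g (ENNReal.ofReal p) μ * (H t ^ (1 / q) * b t) := by
    intro t ht
    have ht0 : 0 < t := zero_lt_one.trans ht.1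
    rw [div_eq_mul_inv, enorm_mul, enorm_inv (by positivity),
      Real.enorm_of_nonneg (sq_nonneg t), ← mul_assoc]
    exact mul_le_mul_left (enorm_integral_mul_le_eLpNorm_mul_lintegral_rpow hpq hg
      ((measurable_heatWeight hf).comp measurable_prodMk_left).aemeasurable
      (heatWeight_nonneg t) (fun x => heatWeight_le_one ht0 (hf0 x))) _
  calc ‖∫ t in (1 : ℝ)..lam, (∫ x, g x * heatWeight f t x ∂μ) / t ^ 2‖ₑ
      ≤ ∫⁻ t in Ioc 1 lam, ‖(∫ x, g x * heatWeight f t x ∂μ) / t ^ 2‖ₑ := by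
        rw [intervalIntegral.integral_of_le hlam]
        exact enorm_integral_le_lintegral_enorm _
    _ ≤ ∫⁻ t in Ioc 1 lam, eLpNorm g (ENNReal.ofReal p) μ * (H t ^ (1 / q) * b t) :=
        setLIntegral_mono' measurableSet_Ioc hpointwise
    _ = eLpNorm g (ENNReal.ofReal p) μ * ∫⁻ t in Ioc 1 lam, H t ^ (1 / q) * b t :=
        lintegral_const_mul _ ((hH.pow_const _).mul hb)
    _ ≤ eLpNorm g (ENNReal.ofReal p) μ *
          ((∫⁻ t in Ioc 1 lam, H t * b t) ^ (1 / q) *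
            (∫⁻ t in Ioc 1 lam, b t) ^ (1 / p)) := by
        gcongr
        exact lintegral_rpow_mul_le _ hpq hH.aemeasurable hb.aemeasurable
    _ ≤ eLpNorm g (ENNReal.ofReal p) μ *
          ((∫⁻ t in Ioc 0 lam, H t / ENNReal.ofReal (t ^ 2)) ^ (1 / q) * 1 ^ (1 / p)) := by
        have hHb : ∫⁻ t in Ioc 1 lam, H t * b t ≤
            ∫⁻ t in Ioc 0 lam, H t / ENNReal.ofReal (t ^ 2) :=
          lintegral_mono_set (Ioc_subset_Ioc_left zero_le_one)
        have hb1 : ∫⁻ t in Ioc 1 lam, b t ≤ 1 :=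
          (lintegral_mono_set Ioc_subset_Ioi_self).trans_eq lintegral_Ioi_one_inv_ofReal_sq
        have hq : 0 ≤ 1 / q := by simpa using hpq.symm.nonneg
        have hp : 0 ≤ 1 / p := by simpa using hpq.nonneg
        gcongr _ * (?_ ^ _ * ?_ ^ _)
    _ = _ := by rw [ENNReal.one_rpow, mul_one]

theorem stmt18_general
    (ψ : ℝ → ℝ)
    (htop : Tendsto ψ atTop atTop)
    {X : Type*} [MeasurableSpace X] (μ : Measure X) [SigmaFinite μ]
    (f : X → ℝ)
    (hfmeas : Measurable f)
    (hfnn : ∀ x, 0 ≤ f x)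
    (hfC : ∃ C : ℝ, ∀ lam > (0:ℝ),
      (∫⁻ u in Set.Ioc (0:ℝ) lam,
        (∫⁻ x, ENNReal.ofReal
            (if f x = 0 then 0 else Real.exp (-(1 / (u * f x)))) ∂μ) /
          ENNReal.ofReal (u ^ 2)) ≤ ENNReal.ofReal (C * ψ lam))
    (g : X → ℝ) (q : ℝ) (hq : 1 < q)
    (hg : MemLp g (ENNReal.ofReal q) μ) :
    Tendsto (fun lam =>
        (∫ t in (1:ℝ)..lam,
          (∫ x, g x * (if f x = 0 then 0 else Real.exp (-(1 / (t * f x)))) ∂μ) / t ^ 2)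
          / ψ lam)
      atTop (𝓝 0) := by
  obtain ⟨C, hC⟩ := hfC
  have hpq := Real.HolderConjugate.conjExponent hq
  have hr0 : 0 ≤ 1 / q.conjExponent := by simpa using hpq.symm.nonneg
  have hr1 : 1 / q.conjExponent < 1 := by simpa using inv_lt_one_of_one_lt₀ hpq.symm.lt
  refine tendsto_div_zero_of_enorm_le_rpow (C := C) htop hg.eLpNorm_ne_top hr0 hr1 ?_
  filter_upwards [eventually_ge_atTop 1] with lam hlam
  exact (enorm_intervalIntegral_heatWeight_le hfmeas hfnn hg.1 hpq hlam).trans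
    (mul_le_mul_right (ENNReal.rpow_le_rpow (hC lam (zero_lt_one.trans_le hlam)) hr0) _)

/-- Let `ψ ∈ Ω`, `(X,μ)` σ-finite, and `f : X → [0,∞)` measurable with
(convention `e^{-1/(u·f(x))} = 0` when `f(x) = 0`)
`sup_{λ>0} (1/ψ(λ)) ∫₀^λ (∫_X e^{-1/(u f)} dμ) du/u² < ∞`.
Let `g ∈ L^q(X,μ)` for some `q ∈ (1,∞)`. Then
`lim_{λ→∞} (1/ψ(λ)) ∫₁^λ (∫_X g·e^{-1/(t f)} dμ) dt/t² = 0`. -/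
theorem stmt18
    (ψ : ℝ → ℝ)
    (hmono : MonotoneOn ψ (Set.Ici 0))
    (hconc : ConcaveOn ℝ (Set.Ici 0) ψ)
    (hzero : ψ 0 = 0)
    (hnonneg : ∀ t ≥ (0:ℝ), 0 ≤ ψ t)
    (htop : Tendsto ψ atTop atTop)
    {X : Type*} [MeasurableSpace X] (μ : Measure X) [SigmaFinite μ]
    (f : X → ℝ)
    (hfmeas : Measurable f)
    (hfnn : ∀ x, 0 ≤ f x)
    (hfC : ∃ C : ℝ, ∀ lam > (0:ℝ),
      (∫⁻ u in Set.Ioc (0:ℝ) lam,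
        (∫⁻ x, ENNReal.ofReal
            (if f x = 0 then 0 else Real.exp (-(1 / (u * f x)))) ∂μ) /
          ENNReal.ofReal (u ^ 2)) ≤ ENNReal.ofReal (C * ψ lam))
    (g : X → ℝ) (q : ℝ) (hq : 1 < q)
    (hg : MemLp g (ENNReal.ofReal q) μ) :
    Tendsto (fun lam =>
        (∫ t in (1:ℝ)..lam,
          (∫ x, g x * (if f x = 0 then 0 else Real.exp (-(1 / (t * f x)))) ∂μ) / t ^ 2)
          / ψ lam)
      atTop (𝓝 0) :=
  stmt18_general ψ htop μ f hfmeas hfnn hfC g q hq hg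
end

section
/- Let ψ ∈ Ω be continuously differentiable on (0,∞) with ψ(t) = ∫₀^t ψ'(s) ds for all t ≥ 0, and assume ψ' ∈ L^p((0,∞)) for every p > 1 and ψ' ∉ L¹((0,∞)). Let (X,μ) be a σ-finite measure space and let f : X → [0,∞) be measurable and essentially bounded with K := sup_{p>1} ‖f‖_{L^p(μ)}/ψ(e^{1/(p-1)}) < ∞. Then, with the convention e^{-1/(u·f(x))} := 0 when f(x) = 0, sup_{λ>0} (1/ψ(λ)) ∫₀^λ (∫_X e^{-1/(u·f(x))} dμ(x)) du/u² < ∞. -/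
/-!
Write `g y = e^{-1/y}` for `y > 0` and `g y = 0` otherwise (`expNegInvGlue`). Since
`u ↦ c g(u c)` is an antiderivative of `u ↦ g(u c) / u²`, Tonelli turns the left-hand side into
`∫ f g(λ f) dμ`. As `g y ≤ y^s` for `0 < s ≤ 1`, this is at most
`λ^s ‖f‖_{1+s}^{1+s} ≤ λ^s (K ψ(e^{1/s}))^{1+s}`. Choosing `1/s = max 1 (log λ)` makes
`λ^s ≤ e`, and as `ψ t / t` is antitone (concavity and `ψ 0 = 0`), `λ^s ψ(e^{1/s}) ≤ e ψ λ` while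
`ψ(e^{1/s})^s` stays bounded.
-/

open Filter Set MeasureTheory

theorem expNegInvGlue.hasDerivAt (x : ℝ) :
    HasDerivAt expNegInvGlue (x⁻¹ ^ 2 * expNegInvGlue x) x := by
  simpa using expNegInvGlue.hasDerivAt_polynomial_eval_inv_mul 1 x

theorem hasDerivAt_mul_expNegInvGlue_mul (c u : ℝ) :
    HasDerivAt (fun u ↦ c * expNegInvGlue (u * c)) (expNegInvGlue (u * c) / u ^ 2) u := by
  have := ((expNegInvGlue.hasDerivAt (u * c)).comp u ((hasDerivAt_id u).mul_const c)).const_mul c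
  refine this.congr_deriv ?_
  rcases eq_or_ne c 0 with rfl | hc
  · simp
  · field_simp

theorem expNegInvGlue_mul_eq_ite {u c : ℝ} (hu : 0 < u) (hc : 0 ≤ c) :
    expNegInvGlue (u * c) = if c = 0 then 0 else Real.exp (-(1 / (u * c))) := by
  rcases hc.eq_or_lt with rfl | hc
  · simp
  · rw [if_neg hc.ne', expNegInvGlue, if_neg (mul_pos hu hc).not_ge, one_div]

theorem expNegInvGlue_le_rpow {y s : ℝ} (hy : 0 ≤ y) (hs₀ : 0 ≤ s) (hs₁ : s ≤ 1) :
    expNegInvGlue y ≤ y ^ s := by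
  rcases hy.eq_or_lt with rfl | hy
  · simpa using Real.rpow_nonneg le_rfl s
  have hy' : 0 < y⁻¹ := inv_pos.2 hy
  have key : y⁻¹ ^ s ≤ Real.exp y⁻¹ :=
    calc y⁻¹ ^ s ≤ Real.exp y⁻¹ ^ s :=
          Real.rpow_le_rpow hy'.le ((Real.add_one_le_exp _).trans' (by linarith)) hs₀
      _ = Real.exp (s * y⁻¹) := by rw [← Real.exp_mul, mul_comm]
      _ ≤ Real.exp y⁻¹ := Real.exp_le_exp.2 (mul_le_of_le_one_left hy'.le hs₁)
  rw [Real.inv_rpow hy.le] at key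
  rw [expNegInvGlue, if_neg hy.not_ge, Real.exp_neg]
  exact inv_le_of_inv_le₀ (Real.rpow_pos_of_pos hy s) key

theorem lintegral_expNegInvGlue_mul_div_sq {c lam : ℝ} (hlam : 0 ≤ lam) :
    ∫⁻ u in Ioc 0 lam, ENNReal.ofReal (expNegInvGlue (u * c)) / ENNReal.ofReal (u ^ 2) =
      ENNReal.ofReal (c * expNegInvGlue (lam * c)) := by
  have hderiv := hasDerivAt_mul_expNegInvGlue_mul c
  have hderiv_nonneg (u : ℝ) : 0 ≤ expNegInvGlue (u * c) / u ^ 2 := by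
    have := expNegInvGlue.nonneg (u * c); positivity
  have hint : IntegrableOn (fun u ↦ expNegInvGlue (u * c) / u ^ 2) (Ioc 0 lam) :=
    intervalIntegral.integrableOn_deriv_of_nonneg
      (fun u _ ↦ (hderiv u).continuousAt.continuousWithinAt) (fun u _ ↦ hderiv u)
      (fun u _ ↦ hderiv_nonneg u)
  have hftc := intervalIntegral.integral_eq_sub_of_hasDerivAt (fun u _ ↦ hderiv u)
    ((intervalIntegrable_iff_integrableOn_Ioc_of_le hlam).2 hint)
  rw [intervalIntegral.integral_of_le hlam] at hftc
  simp only [zero_mul, expNegInvGlue.zero, mul_zero, sub_zero] at hftc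
  rw [← hftc, ofReal_integral_eq_lintegral_ofReal hint (ae_of_all _ hderiv_nonneg)]
  refine setLIntegral_congr_fun measurableSet_Ioc fun u hu ↦ ?_
  rw [ENNReal.ofReal_div_of_pos (pow_pos hu.1 2)]

theorem setLIntegral_lintegral_expNegInvGlue_mul_div_sq {X : Type*} [MeasurableSpace X]
    (μ : Measure X) [SFinite μ] {f : X → ℝ} (hf : Measurable f) {lam : ℝ} (hlam : 0 ≤ lam) :
    ∫⁻ u in Ioc 0 lam, (∫⁻ x, ENNReal.ofReal (expNegInvGlue (u * f x)) ∂μ) /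
        ENNReal.ofReal (u ^ 2) =
      ∫⁻ x, ENNReal.ofReal (f x * expNegInvGlue (lam * f x)) ∂μ := by
  have hmeas : Measurable fun q : ℝ × X ↦ ENNReal.ofReal (expNegInvGlue (q.1 * f q.2)) :=
    (expNegInvGlue.contDiff (n := 0)).continuous.measurable.comp
      (measurable_fst.mul (hf.comp measurable_snd)) |>.ennreal_ofReal
  calc ∫⁻ u in Ioc 0 lam, (∫⁻ x, ENNReal.ofReal (expNegInvGlue (u * f x)) ∂μ) /
          ENNReal.ofReal (u ^ 2)
      = ∫⁻ u in Ioc 0 lam, (∫⁻ x, ENNReal.ofReal (expNegInvGlue (u * f x)) /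
          ENNReal.ofReal (u ^ 2) ∂μ) := by
        refine lintegral_congr fun u ↦ ?_
        simp only [div_eq_mul_inv]
        exact (lintegral_mul_const'' _ (hmeas.comp measurable_prodMk_left).aemeasurable).symm
    _ = ∫⁻ x, (∫⁻ u in Ioc 0 lam, ENNReal.ofReal (expNegInvGlue (u * f x)) /
          ENNReal.ofReal (u ^ 2)) ∂μ :=
        lintegral_lintegral_swap
          (hmeas.div (measurable_fst.pow_const 2).ennreal_ofReal).aemeasurable
    _ = ∫⁻ x, ENNReal.ofReal (f x * expNegInvGlue (lam * f x)) ∂μ :=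
        lintegral_congr fun x ↦ lintegral_expNegInvGlue_mul_div_sq hlam

theorem lintegral_mul_expNegInvGlue_le {X : Type*} [MeasurableSpace X] {μ : Measure X}
    {f : X → ℝ} (hf : Measurable f) (hfnn : ∀ x, 0 ≤ f x) {lam s B : ℝ} (hlam : 0 ≤ lam)
    (hs₀ : 0 < s) (hs₁ : s ≤ 1) (hB₀ : 0 ≤ B)
    (hB : eLpNorm f (ENNReal.ofReal (1 + s)) μ ≤ ENNReal.ofReal B) :
    ∫⁻ x, ENNReal.ofReal (f x * expNegInvGlue (lam * f x)) ∂μ ≤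
      ENNReal.ofReal (lam ^ s * B ^ (1 + s)) := by
  have hp : 0 < 1 + s := by linarith
  have hpointwise (x : X) : ENNReal.ofReal (f x * expNegInvGlue (lam * f x)) ≤
      ENNReal.ofReal (lam ^ s) * ‖f x‖ₑ ^ (1 + s) := by
    have hfx := hfnn x
    rw [Real.enorm_eq_ofReal hfx, ENNReal.ofReal_rpow_of_nonneg hfx hp.le,
      ← ENNReal.ofReal_mul (Real.rpow_nonneg hlam s)]
    refine ENNReal.ofReal_le_ofReal ?_
    calc f x * expNegInvGlue (lam * f x) ≤ f x * (lam * f x) ^ s :=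
          mul_le_mul_of_nonneg_left
            (expNegInvGlue_le_rpow (mul_nonneg hlam hfx) hs₀.le hs₁) hfx
      _ = lam ^ s * f x ^ (1 + s) := by
          rw [Real.mul_rpow hlam hfx, Real.rpow_add' hfx hp.ne', Real.rpow_one]; ring
  have hnorm : eLpNorm f (ENNReal.ofReal (1 + s)) μ = eLpNorm' f (1 + s) μ := by
    rw [eLpNorm_eq_eLpNorm' (by simpa using hp) ENNReal.ofReal_ne_top,
      ENNReal.toReal_ofReal hp.le]
  calc ∫⁻ x, ENNReal.ofReal (f x * expNegInvGlue (lam * f x)) ∂μ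
      ≤ ENNReal.ofReal (lam ^ s) * ∫⁻ x, ‖f x‖ₑ ^ (1 + s) ∂μ := by
        rw [← lintegral_const_mul'' _ (hf.enorm.pow_const _).aemeasurable]
        exact lintegral_mono hpointwise
    _ ≤ ENNReal.ofReal (lam ^ s) * ENNReal.ofReal B ^ (1 + s) := by
        rw [lintegral_rpow_enorm_eq_rpow_eLpNorm' hp, ← hnorm]
        gcongr
    _ = ENNReal.ofReal (lam ^ s * B ^ (1 + s)) := by
        rw [ENNReal.ofReal_rpow_of_nonneg hB₀ hp.le,
          ← ENNReal.ofReal_mul (Real.rpow_nonneg hlam s)]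

theorem Real.rpow_le_max_one {x s : ℝ} (hx : 0 ≤ x) (hs₀ : 0 ≤ s) (hs₁ : s ≤ 1) :
    x ^ s ≤ max 1 x := by
  rcases le_total x 1 with h | h
  · exact (Real.rpow_le_one hx h hs₀).trans (le_max_left _ _)
  · exact (Real.rpow_le_self_of_one_le h hs₁).trans (le_max_right _ _)

section Concave

variable {ψ : ℝ → ℝ}

theorem ConcaveOn.mul_apply_le_mul_apply (hconc : ConcaveOn ℝ (Ici 0) ψ) (hzero : ψ 0 = 0)
    {a b : ℝ} (ha : 0 < a) (hab : a ≤ b) : a * ψ b ≤ b * ψ a := by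
  have hslope := hconc.antitoneOn_slope_gt self_mem_Ici ⟨(ha.le : (0:ℝ) ≤ a), ha⟩
    ⟨(ha.le.trans hab : (0:ℝ) ≤ b), ha.trans_le hab⟩ hab
  simp only [slope_def_field, hzero, sub_zero] at hslope
  rwa [div_le_div_iff₀ (ha.trans_le hab) ha, mul_comm, mul_comm (ψ a)] at hslope

theorem ConcaveOn.rpow_mul_apply_exp_max_log_le (hconc : ConcaveOn ℝ (Ici 0) ψ)
    (hzero : ψ 0 = 0) {lam : ℝ} (hlam : 0 < lam) :
    lam ^ (max 1 (Real.log lam))⁻¹ * ψ (Real.exp (max 1 (Real.log lam))) ≤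
      Real.exp 1 * ψ lam := by
  rcases le_total (Real.log lam) 1 with h | h
  · rw [max_eq_left h, inv_one, Real.rpow_one]
    exact hconc.mul_apply_le_mul_apply hzero hlam ((Real.log_le_iff_le_exp hlam).1 h)
  · have hlog : 0 < Real.log lam := one_pos.trans_le h
    rw [max_eq_right h, Real.exp_log hlam, Real.rpow_def_of_pos hlam, mul_inv_cancel₀ hlog.ne']

theorem ConcaveOn.mul_apply_exp_rpow_inv_le (hconc : ConcaveOn ℝ (Ici 0) ψ) (hzero : ψ 0 = 0)
    (hnonneg : ∀ t ≥ (0:ℝ), 0 ≤ ψ t) {K L : ℝ} (hK : 0 ≤ K) (hL : 1 ≤ L) :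
    (K * ψ (Real.exp L)) ^ L⁻¹ ≤ Real.exp 1 * max 1 (K * ψ 1) := by
  have hL₀ : 0 < L := one_pos.trans_le hL
  have hψ : ψ (Real.exp L) ≤ Real.exp L * ψ 1 := by
    simpa using hconc.mul_apply_le_mul_apply hzero one_pos (Real.one_le_exp hL₀.le)
  have hψ1 : 0 ≤ K * ψ 1 := mul_nonneg hK (hnonneg 1 zero_le_one)
  calc (K * ψ (Real.exp L)) ^ L⁻¹ ≤ (Real.exp L * (K * ψ 1)) ^ L⁻¹ :=
        Real.rpow_le_rpow (mul_nonneg hK (hnonneg _ (Real.exp_pos L).le))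
          (by linarith [mul_le_mul_of_nonneg_left hψ hK]) (inv_nonneg.2 hL₀.le)
    _ = Real.exp 1 * (K * ψ 1) ^ L⁻¹ := by
        rw [Real.mul_rpow (Real.exp_pos L).le hψ1, ← Real.exp_mul, mul_inv_cancel₀ hL₀.ne']
    _ ≤ Real.exp 1 * max 1 (K * ψ 1) := by
        gcongr
        exact Real.rpow_le_max_one hψ1 (inv_nonneg.2 hL₀.le) (inv_le_one_of_one_le₀ hL)

theorem ConcaveOn.rpow_mul_mul_apply_exp_rpow_le (hconc : ConcaveOn ℝ (Ici 0) ψ)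
    (hzero : ψ 0 = 0) (hnonneg : ∀ t ≥ (0:ℝ), 0 ≤ ψ t) {K lam : ℝ} (hK : 0 ≤ K)
    (hlam : 0 < lam) :
    lam ^ (max 1 (Real.log lam))⁻¹ *
        (K * ψ (Real.exp (max 1 (Real.log lam)))) ^ (1 + (max 1 (Real.log lam))⁻¹) ≤
      K * Real.exp 1 ^ 2 * max 1 (K * ψ 1) * ψ lam := by
  set L := max 1 (Real.log lam)
  have hM : 0 ≤ K * ψ (Real.exp L) := mul_nonneg hK (hnonneg _ (Real.exp_pos L).le)
  calc lam ^ L⁻¹ * (K * ψ (Real.exp L)) ^ (1 + L⁻¹)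
      = K * (lam ^ L⁻¹ * ψ (Real.exp L)) * (K * ψ (Real.exp L)) ^ L⁻¹ := by
        rw [Real.rpow_add' hM (by positivity), Real.rpow_one]; ring
    _ ≤ K * (Real.exp 1 * ψ lam) * (Real.exp 1 * max 1 (K * ψ 1)) :=
        mul_le_mul
          (mul_le_mul_of_nonneg_left (hconc.rpow_mul_apply_exp_max_log_le hzero hlam) hK)
          (hconc.mul_apply_exp_rpow_inv_le hzero hnonneg hK (le_max_left _ _))
          (Real.rpow_nonneg hM _)
          (mul_nonneg hK (mul_nonneg (Real.exp_pos 1).le (hnonneg lam hlam.le)))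
    _ = K * Real.exp 1 ^ 2 * max 1 (K * ψ 1) * ψ lam := by ring

end Concave

theorem stmt19_general
    (ψ : ℝ → ℝ)
    (hconc : ConcaveOn ℝ (Set.Ici 0) ψ)
    (hzero : ψ 0 = 0)
    (hnonneg : ∀ t ≥ (0:ℝ), 0 ≤ ψ t)
    {X : Type*} [MeasurableSpace X] (μ : Measure X) [SigmaFinite μ]
    (f : X → ℝ)
    (hfmeas : Measurable f)
    (hfnn : ∀ x, 0 ≤ f x)
    (K : ℝ)
    (hfLp : ∀ p > (1:ℝ),
      eLpNorm f (ENNReal.ofReal p) μ ≤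
        ENNReal.ofReal (K * ψ (Real.exp (1 / (p - 1))))) :
    ∃ C : ℝ, ∀ lam > (0:ℝ),
      (∫⁻ u in Set.Ioc (0:ℝ) lam,
        (∫⁻ x, ENNReal.ofReal
            (if f x = 0 then 0 else Real.exp (-(1 / (u * f x)))) ∂μ) /
          ENNReal.ofReal (u ^ 2)) ≤ ENNReal.ofReal (C * ψ lam) := by
  set K₁ := max K 1
  have hK₁ : 0 ≤ K₁ := zero_le_one.trans (le_max_right _ _)
  refine ⟨K₁ * Real.exp 1 ^ 2 * max 1 (K₁ * ψ 1), fun lam hlam ↦ ?_⟩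
  set L := max 1 (Real.log lam)
  have hL : 1 ≤ L := le_max_left _ _
  have hM : 0 ≤ ψ (Real.exp L) := hnonneg _ (Real.exp_pos L).le
  have hnorm : eLpNorm f (ENNReal.ofReal (1 + L⁻¹)) μ ≤
      ENNReal.ofReal (K₁ * ψ (Real.exp L)) := by
    refine (hfLp _ (by simpa using one_pos.trans_le hL)).trans (ENNReal.ofReal_le_ofReal ?_)
    rw [add_sub_cancel_left, one_div, inv_inv]
    exact mul_le_mul_of_nonneg_right (le_max_left _ _) hM
  calc _ = ∫⁻ u in Ioc 0 lam, (∫⁻ x, ENNReal.ofReal (expNegInvGlue (u * f x)) ∂μ) /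
          ENNReal.ofReal (u ^ 2) :=
        setLIntegral_congr_fun measurableSet_Ioc fun u hu ↦ by
          simp only [expNegInvGlue_mul_eq_ite hu.1 (hfnn _)]
    _ = ∫⁻ x, ENNReal.ofReal (f x * expNegInvGlue (lam * f x)) ∂μ :=
        setLIntegral_lintegral_expNegInvGlue_mul_div_sq μ hfmeas hlam.le
    _ ≤ ENNReal.ofReal (lam ^ L⁻¹ * (K₁ * ψ (Real.exp L)) ^ (1 + L⁻¹)) :=
        lintegral_mul_expNegInvGlue_le hfmeas hfnn hlam.le (by positivity)
          (inv_le_one_of_one_le₀ hL) (mul_nonneg hK₁ hM) hnorm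
    _ ≤ _ :=
        ENNReal.ofReal_le_ofReal (hconc.rpow_mul_mul_apply_exp_rpow_le hzero hnonneg hK₁ hlam)

/-- Let `ψ ∈ Ω` be continuously differentiable on `(0,∞)` with
`ψ t = ∫₀^t ψ'`, `ψ' ∈ L^p((0,∞))` for every `p > 1` and `ψ' ∉ L¹((0,∞))`. Let `(X,μ)`
be σ-finite and `f : X → [0,∞)` measurable, essentially bounded, with
`sup_{p>1} ‖f‖_p/ψ(e^{1/(p-1)}) < ∞`. Then (convention `e^{-1/(u·f(x))} = 0` when
`f(x) = 0`)
`sup_{λ>0} (1/ψ(λ)) ∫₀^λ (∫_X e^{-1/(u f)} dμ) du/u² < ∞`. -/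
theorem stmt19
    (ψ ψ' : ℝ → ℝ)
    (hmono : MonotoneOn ψ (Set.Ici 0))
    (hconc : ConcaveOn ℝ (Set.Ici 0) ψ)
    (hzero : ψ 0 = 0)
    (hnonneg : ∀ t ≥ (0:ℝ), 0 ≤ ψ t)
    (htop : Tendsto ψ atTop atTop)
    (hderiv : ∀ t ∈ Set.Ioi (0:ℝ), HasDerivAt ψ (ψ' t) t)
    (hcont : ContinuousOn ψ' (Set.Ioi 0))
    (hfund : ∀ t ≥ (0:ℝ), ψ t = ∫ s in (0:ℝ)..t, ψ' s)
    (hLp : ∀ p : ℝ, 1 < p →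
      MemLp ψ' (ENNReal.ofReal p) (volume.restrict (Set.Ioi (0:ℝ))))
    (hnotL1 : (∫⁻ t in Set.Ioi (0:ℝ), ENNReal.ofReal (ψ' t)) = ⊤)
    {X : Type*} [MeasurableSpace X] (μ : Measure X) [SigmaFinite μ]
    (f : X → ℝ)
    (hfmeas : Measurable f)
    (hfnn : ∀ x, 0 ≤ f x)
    (hfbdd : ∃ C : ℝ, ∀ᵐ x ∂μ, f x ≤ C)
    (K : ℝ)
    (hfLp : ∀ p > (1:ℝ),
      eLpNorm f (ENNReal.ofReal p) μ ≤
        ENNReal.ofReal (K * ψ (Real.exp (1 / (p - 1))))) :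
    ∃ C : ℝ, ∀ lam > (0:ℝ),
      (∫⁻ u in Set.Ioc (0:ℝ) lam,
        (∫⁻ x, ENNReal.ofReal
            (if f x = 0 then 0 else Real.exp (-(1 / (u * f x)))) ∂μ) /
          ENNReal.ofReal (u ^ 2)) ≤ ENNReal.ofReal (C * ψ lam) :=
  stmt19_general ψ hconc hzero hnonneg μ f hfmeas hfnn K hfLp
end
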